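/- arXiv:1907.12543 — 7 statements merged into one kernel-verified Lean document; each statement's English description precedes it below -/
import Mathlib

section
/- Let α be an alphabet and let a : ℕ → α be a sequence in the class 𝒞. Then for every x ∈ ℕ the block a(4x)a(4x+1)a(4x+2)a(4x+3) is of the form x y y x with distinct letters, i.e. a(4x) = a(4x+3), a(4x+1) = a(4x+2) and a(4x) ≠ a(4x+1); consequently a(2n) ≠ a(2n+1) for every n ∈ ℕ. -/
/-- Membership in the class 𝒞: there exist a letter `c`, bijections `f n`,
and words `w n` with `w 0 = [c]`,
`w (n+1) = w n ++ f n (w n) ++ f n (w n) ++ w n`, `f n (w n) ≠ w n`,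
and `w n` is the prefix of `a` of length `4 ^ n`. -/
def InC {α : Type*} (a : ℕ → α) : Prop :=
  ∃ (c : α) (f : ℕ → α ≃ α) (w : ℕ → List α),
    w 0 = [c] ∧
    (∀ n, w (n + 1) = w n ++ (w n).map (f n) ++ (w n).map (f n) ++ w n) ∧
    (∀ n, (w n).map (f n) ≠ w n) ∧
    (∀ n, w n = (List.range (4 ^ n)).map a)

/-- The factor `a(x) a(x+1) ⋯ a(x+y-1)` of the sequence `a`. -/
def factor {α : Type*} (a : ℕ → α) (x y : ℕ) : List α :=
  (List.range y).map (fun i => a (x + i))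

/-- The prefix of `a` of length `n`. -/
def prefixWord {α : Type*} (a : ℕ → α) (n : ℕ) : List α :=
  factor a 0 n

/-- The palindromic length of a finite word: the least number of palindromes
whose concatenation is the word (0 for the empty word). -/
noncomputable def palLen {α : Type*} (w : List α) : ℕ :=
  sInf {k | ∃ ps : List (List α),
    ps.length = k ∧ (∀ p ∈ ps, p.Palindrome) ∧ ps.flatten = w}

/-- `P a n` is the palindromic length of the prefix of `a` of length `n`. -/
noncomputable def P {α : Type*} (a : ℕ → α) (n : ℕ) : ℕ :=
  palLen (prefixWord a n)

/-- The factor of length `y` at position `x` is embedded into the center of the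
factor of length `4 * r` at position `4 * z`. -/
def EmbedCenter (x y z r : ℕ) : Prop :=
  4 * z ≤ x ∧ x + y ≤ 4 * z + 4 * r ∧ x - 4 * z = (4 * z + 4 * r) - (x + y)

/-- The Thue–Morse sequence: `true` iff the number of ones in the binary
expansion is odd. -/
def thueMorse (n : ℕ) : Bool :=
  (Nat.digits 2 n).count 1 % 2 == 1

/-! Writing `4 ^ m * x + i` with the leading base-4 digit of `x` split off shows, by induction on
the number of digits, that every aligned block `a (4 ^ m * x) ⋯ a (4 ^ m * x + 4 ^ m - 1)` is the
letterwise image of the prefix of length `4 ^ m` under a composition of the bijections `f n`.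
For `m = 1` that prefix is `w 1 = c (f 0 c) (f 0 c) c` with `f 0 c ≠ c`, and a bijection
preserves the pattern `x y y x` with `x ≠ y`. -/

theorem List.getElem?_append_quarters {α : Type*} {u v : List α} (hv : v.length = u.length)
    {j : ℕ} (hj : j < u.length) :
    (u ++ v ++ v ++ u)[u.length + j]? = v[j]? ∧
      (u ++ v ++ v ++ u)[2 * u.length + j]? = v[j]? ∧
      (u ++ v ++ v ++ u)[3 * u.length + j]? = u[j]? := by
  refine ⟨?_, ?_, ?_⟩ <;>
    simp only [List.getElem?_append, List.length_append, hv] <;>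
    split_ifs <;> first | omega | congr 1; omega

theorem apply_quarters_of_eq_prefix {α : Type*} {a : ℕ → α} {f : ℕ → α ≃ α} {w : ℕ → List α}
    (hrec : ∀ n, w (n + 1) = w n ++ (w n).map (f n) ++ (w n).map (f n) ++ w n)
    (hpre : ∀ n, w n = (List.range (4 ^ n)).map a) {n j : ℕ} (hj : j < 4 ^ n) :
    a (4 ^ n + j) = f n (a j) ∧ a (2 * 4 ^ n + j) = f n (a j) ∧ a (3 * 4 ^ n + j) = a j := by
  have hw : ∀ m i, i < 4 ^ m → (w m)[i]? = some (a i) := fun m i hi => by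
    simp [hpre m, hi]
  have hlen : (w n).length = 4 ^ n := by simp [hpre n]
  have hq := List.getElem?_append_quarters (List.length_map (f n)) (hlen ▸ hj)
  rw [← hrec, hlen, List.getElem?_map, hw n j hj] at hq
  have hlt : 3 * 4 ^ n + j < 4 ^ (n + 1) := by rw [pow_succ]; omega
  rw [hw _ _ (by omega), hw _ _ (by omega), hw _ _ hlt] at hq
  simpa using hq

namespace InC

variable {α : Type*} {a : ℕ → α}

theorem apply_zero_three_and_one_two (hC : InC a) : a 0 = a 3 ∧ a 1 = a 2 ∧ a 0 ≠ a 1 := by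
  obtain ⟨-, f, w, -, hrec, hne, hpre⟩ := hC
  obtain ⟨h1, h2, h3⟩ := apply_quarters_of_eq_prefix hrec hpre (n := 0) (j := 0) one_pos
  have hne0 : f 0 (a 0) ≠ a 0 := by simpa [hpre 0] using hne 0
  simp only [pow_zero, mul_one, add_zero] at h1 h2 h3
  exact ⟨h3.symm, h1.trans h2.symm, fun h => hne0 (h1 ▸ h).symm⟩

theorem exists_equiv_quarter (hC : InC a) (n : ℕ) {k : ℕ} (hk : k < 4) :
    ∃ g : α ≃ α, ∀ j < 4 ^ n, a (k * 4 ^ n + j) = g (a j) := by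
  obtain ⟨-, f, w, -, hrec, -, hpre⟩ := hC
  have hq := fun j (hj : j < 4 ^ n) => apply_quarters_of_eq_prefix hrec hpre hj
  interval_cases k
  · exact ⟨Equiv.refl α, fun j _ => by simp⟩
  · exact ⟨f n, fun j hj => by simpa using (hq j hj).1⟩
  · exact ⟨f n, fun j hj => (hq j hj).2.1⟩
  · exact ⟨Equiv.refl α, fun j hj => (hq j hj).2.2⟩

theorem exists_equiv_block (hC : InC a) (m x : ℕ) :
    ∃ g : α ≃ α, ∀ i < 4 ^ m, a (4 ^ m * x + i) = g (a i) := by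
  suffices ∀ n x, x < 4 ^ n → ∃ g : α ≃ α, ∀ i < 4 ^ m, a (4 ^ m * x + i) = g (a i) from
    this x x (Nat.lt_pow_self (by norm_num))
  intro n
  induction n with
  | zero => intro x hx; exact ⟨Equiv.refl α, fun i _ => by simp [Nat.lt_one_iff.mp hx]⟩
  | succ n ih =>
    intro x hx
    have hk : x / 4 ^ n < 4 := Nat.div_lt_of_lt_mul (by rwa [← pow_succ])
    obtain ⟨g, hg⟩ := ih (x % 4 ^ n) (Nat.mod_lt _ (by positivity))
    obtain ⟨h, hh⟩ := hC.exists_equiv_quarter (n + m) hk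
    refine ⟨g.trans h, fun i hi => ?_⟩
    have hsplit : 4 ^ m * x + i = x / 4 ^ n * 4 ^ (n + m) + (4 ^ m * (x % 4 ^ n) + i) := by
      conv_lhs => rw [← Nat.div_add_mod x (4 ^ n)]
      ring
    have hlt : 4 ^ m * (x % 4 ^ n) + i < 4 ^ (n + m) := by
      calc 4 ^ m * (x % 4 ^ n) + i < 4 ^ m * (x % 4 ^ n + 1) := by rw [mul_add_one]; omega
        _ ≤ 4 ^ m * 4 ^ n := Nat.mul_le_mul_left _ (Nat.mod_lt _ (by positivity))
        _ = 4 ^ (n + m) := by ring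
    rw [hsplit, hh _ hlt, hg i hi, Equiv.trans_apply]

theorem apply_four_mul (hC : InC a) (x : ℕ) :
    a (4 * x) = a (4 * x + 3) ∧ a (4 * x + 1) = a (4 * x + 2) ∧ a (4 * x) ≠ a (4 * x + 1) := by
  obtain ⟨g, hg⟩ := hC.exists_equiv_block 1 x
  simp only [pow_one] at hg
  obtain ⟨h03, h12, h01⟩ := hC.apply_zero_three_and_one_two
  have hg0 := hg 0 (by norm_num)
  rw [add_zero] at hg0
  rw [hg0, hg 1 (by norm_num), hg 2 (by norm_num), hg 3 (by norm_num), h03, h12]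
  exact ⟨rfl, rfl, by rwa [← h03, ← h12, g.injective.ne_iff]⟩

end InC

theorem stmt0 {α : Type*} (a : ℕ → α) (hC : InC a) :
    (∀ x : ℕ, a (4 * x) = a (4 * x + 3) ∧ a (4 * x + 1) = a (4 * x + 2) ∧
      a (4 * x) ≠ a (4 * x + 1)) ∧
    (∀ n : ℕ, a (2 * n) ≠ a (2 * n + 1)) := by
  refine ⟨hC.apply_four_mul, fun n => ?_⟩
  obtain ⟨k, rfl | rfl⟩ := Nat.even_or_odd' n
  · simpa [← mul_assoc] using (hC.apply_four_mul k).2.2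
  · obtain ⟨h03, h12, h01⟩ := hC.apply_four_mul k
    rw [show 2 * (2 * k + 1) = 4 * k + 2 by ring, ← h12, ← h03]
    exact h01.symm
end

section
/- Let a : ℕ → α be a sequence in the class 𝒞. If a factor w_a(x, y) of a is a palindrome and y is odd, then y = 1 or y = 3. -/
def IsPqqpBlock {α : Type*} (u : ℕ → α) (m : ℕ) : Prop :=
  u (m + 3) = u m ∧ u (m + 2) = u (m + 1) ∧ u (m + 1) ≠ u m

section Blocks

variable {α : Type*}

theorem IsPqqpBlock.of_apply_eq {u : ℕ → α} {g : α → α} (hg : Function.Injective g)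
    {m r : ℕ} (hr : IsPqqpBlock u r) (h : ∀ j < 4, u (m + j) = g (u (r + j))) :
    IsPqqpBlock u m := by
  obtain ⟨h3, h2, h1⟩ := hr
  have e0 := h 0 (by norm_num)
  have e1 := h 1 (by norm_num)
  have e2 := h 2 (by norm_num)
  have e3 := h 3 (by norm_num)
  simp only [add_zero] at e0
  exact ⟨by rw [e3, e0, h3], by rw [e2, e1, h2], by rw [e1, e0]; exact hg.ne h1⟩

theorem not_palindrome_window_of_isPqqpBlock {u : ℕ → α} (hu : ∀ k, IsPqqpBlock u (4 * k))
    (m : ℕ) : ¬ (u (m + 1) = u (m + 3) ∧ u m = u (m + 4)) := by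
  rintro ⟨h1, h0⟩
  obtain ⟨k, rfl | rfl | rfl | rfl⟩ :
      ∃ k, m = 4 * k ∨ m = 4 * k + 1 ∨ m = 4 * k + 2 ∨ m = 4 * k + 3 :=
    ⟨m / 4, by omega⟩
  all_goals
    have hk := hu k
    have hk' := hu (k + 1)
    unfold IsPqqpBlock at hk hk'
    grind

end Blocks

theorem List.Palindrome.factor_apply {α : Type*} {a : ℕ → α} {x y : ℕ}
    (hpal : (factor a x y).Palindrome) {i : ℕ} (hi : i < y) :
    a (x + i) = a (x + (y - 1 - i)) := by
  have hlen : (factor a x y).length = y := by simp [factor]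
  have h := List.getElem_of_eq hpal.reverse_eq (i := i) (by simpa [hlen] using hi)
  simpa [factor, List.getElem_reverse, hlen] using h.symm

section ClassC

variable {α : Type*} {a : ℕ → α} {c : α} {f : ℕ → α ≃ α} {w : ℕ → List α}

theorem List.map_range_add (u : ℕ → α) (m n : ℕ) :
    (List.range (m + n)).map u =
      (List.range m).map u ++ (List.range n).map (fun i => u (m + i)) := by
  simp [List.range_add, Function.comp_def]

theorem exists_injective_apply_quarter
    (hrec : ∀ n, w (n + 1) = w n ++ (w n).map (f n) ++ (w n).map (f n) ++ w n)
    (hw : ∀ n, w n = (List.range (4 ^ n)).map a) (n : ℕ) {q : ℕ} (hq : q < 4) :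
    ∃ g : α → α, Function.Injective g ∧ ∀ i < 4 ^ n, a (q * 4 ^ n + i) = g (a i) := by
  have hsplit := hrec n
  rw [hw, hw, show 4 ^ (n + 1) = 4 ^ n + 4 ^ n + 4 ^ n + 4 ^ n by ring, List.map_range_add,
    List.map_range_add, List.map_range_add, List.map_map] at hsplit
  set N := 4 ^ n
  obtain ⟨h012, h3⟩ := List.append_inj' hsplit (by simp)
  obtain ⟨h01, h2⟩ := List.append_inj' h012 (by simp)
  obtain ⟨-, h1⟩ := List.append_inj' h01 (by simp)
  have key : ∀ g : α → α,
      (List.range N).map (fun i => a (q * N + i)) = (List.range N).map (g ∘ a) →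
        ∀ i < N, a (q * N + i) = g (a i) :=
    fun g h i hi => List.map_inj_left.mp h i (List.mem_range.mpr hi)
  interval_cases q
  · exact ⟨id, Function.injective_id, fun i _ => by simp⟩
  · exact ⟨f n, (f n).injective, key _ (by simpa using h1)⟩
  · exact ⟨f n, (f n).injective, key _ (by simpa [two_mul] using h2)⟩
  · exact ⟨id, Function.injective_id,
      key _ (by simpa [show 3 * N = N + N + N by ring] using h3)⟩

theorem isPqqpBlock_zero (hw0 : w 0 = [c])
    (hrec : ∀ n, w (n + 1) = w n ++ (w n).map (f n) ++ (w n).map (f n) ++ w n)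
    (hf : ∀ n, (w n).map (f n) ≠ w n) (hw : ∀ n, w n = (List.range (4 ^ n)).map a) :
    IsPqqpBlock a 0 := by
  have h := hw 1
  rw [hrec, hw0] at h
  simp only [List.map_cons, List.map_nil, List.cons_append, List.nil_append, pow_one,
    List.range_succ, List.range_zero, List.cons.injEq, and_true] at h
  have hfc : f 0 c ≠ c := by simpa [hw0] using hf 0
  obtain ⟨rfl, h1, h2, h3⟩ := h
  exact ⟨by simp [← h3], by simp [← h1, ← h2], by simpa [← h1] using hfc⟩

theorem isPqqpBlock_four_mul (hw0 : w 0 = [c])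
    (hrec : ∀ n, w (n + 1) = w n ++ (w n).map (f n) ++ (w n).map (f n) ++ w n)
    (hf : ∀ n, (w n).map (f n) ≠ w n) (hw : ∀ n, w n = (List.range (4 ^ n)).map a) (k : ℕ) :
    IsPqqpBlock a (4 * k) := by
  suffices h : ∀ n k, 4 * k + 3 < 4 ^ (n + 1) → IsPqqpBlock a (4 * k) by
    refine h k k ?_
    have := Nat.lt_pow_self (n := k) (by norm_num : 1 < 4)
    rw [pow_succ]
    omega
  intro n
  induction n with
  | zero =>
    intro k hk
    obtain rfl : k = 0 := by omega
    exact isPqqpBlock_zero hw0 hrec hf hw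
  | succ n ih =>
    intro k hk
    set N := 4 ^ (n + 1)
    have hN : 4 ∣ N := dvd_pow_self 4 n.succ_ne_zero
    have hkN : 4 * k < 4 * N := by rw [pow_succ] at hk; omega
    obtain ⟨g, hg, hq⟩ := exists_injective_apply_quarter hrec hw (n + 1) (q := 4 * k / N)
      (Nat.div_lt_of_lt_mul (by omega))
    have hdecomp : 4 * k / N * N + 4 * k % N = 4 * k := Nat.div_add_mod' _ _
    have hr4 : 4 ∣ 4 * k % N := (Nat.dvd_mod_iff hN).mpr (dvd_mul_right 4 k)
    have hr : 4 * k % N + 3 < N := by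
      have := Nat.mod_lt (4 * k) (show 0 < N by positivity)
      omega
    have hr_block : IsPqqpBlock a (4 * k % N) := by
      simpa only [Nat.mul_div_cancel' hr4] using ih (4 * k % N / 4) (by omega)
    refine hr_block.of_apply_eq hg fun j hj => ?_
    rw [← hq (4 * k % N + j) (by omega), ← add_assoc, hdecomp]

end ClassC

theorem stmt1 {α : Type*} (a : ℕ → α) (hC : InC a) (x y : ℕ)
    (hpal : (factor a x y).Palindrome) (hodd : Odd y) :
    y = 1 ∨ y = 3 := by
  obtain ⟨c, f, w, hw0, hrec, hf, hw⟩ := hC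
  obtain ⟨t, rfl⟩ := hodd
  by_contra hlong
  obtain ⟨s, rfl⟩ : ∃ s, t = s + 2 := ⟨t - 2, by omega⟩
  refine not_palindrome_window_of_isPqqpBlock (isPqqpBlock_four_mul hw0 hrec hf hw) (x + s)
    ⟨?_, ?_⟩
  · have h := hpal.factor_apply (i := s + 1) (by omega)
    rwa [show 2 * (s + 2) + 1 - 1 - (s + 1) = s + 3 by omega, ← add_assoc, ← add_assoc] at h
  · have h := hpal.factor_apply (i := s) (by omega)
    rwa [show 2 * (s + 2) + 1 - 1 - s = s + 4 by omega, ← add_assoc] at h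
end

section
/- Let a : ℕ → α be a sequence in the class 𝒞. If a factor w_a(x, y) of a is a palindrome with y even and y ≥ 2, then either there exist z, r ∈ ℕ such that w_a(4z, 4r) is a palindrome and w_a(x, y) is embedded into the center of w_a(4z, 4r), or x ≡ 3 (mod 4) and y ≡ 2 (mod 4). -/
/-!
Every sequence of 𝒞 is a concatenation of aligned blocks `u v v u` with `u ≠ v`: this holds in
`w 1 = c (f c) (f c) c`, and each later prefix is made of copies of the previous one under
bijections, which preserve the block shape. Consequently the two central letters of an
even-length palindrome cannot be the pair `u v` or `v u` of a block, so its center `x + y / 2`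
is even, i.e. `4 ∣ 2x + y`. If moreover `x ≢ 3 (mod 4)`, the letters just outside the
palindrome are mirror images inside their blocks of letters that are mirror images in the
palindrome, so the palindrome can be extended by one letter on each side until it starts at a
multiple of 4.
-/

section

variable {α : Type*} {a : ℕ → α} {x y : ℕ}

theorem apply_eq_apply_of_factor_palindrome (h : (factor a x y).Palindrome) {m n : ℕ}
    (hm : x ≤ m) (hn : x ≤ n) (hmn : m + n + 1 = 2 * x + y) : a m = a n := by
  have hsym : a (x + (m - x)) = a (x + (y - 1 - (m - x))) := by
    simpa [factor, show m - x < y by omega] using (congrArg (·[m - x]?) h.reverse_eq).symm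
  rwa [show x + (m - x) = m by omega, show x + (y - 1 - (m - x)) = n by omega] at hsym

theorem factor_palindrome_cons_concat (h : (factor a (x + 1) y).Palindrome)
    (hend : a x = a (x + y + 1)) : (factor a x (y + 2)).Palindrome := by
  have hsplit : factor a x (y + 2) = a x :: (factor a (x + 1) y ++ [a (x + y + 1)]) := by
    rw [factor, List.range_succ, List.range_succ_eq_map]
    simp [factor, add_assoc, add_comm 1]
  rw [hsplit, ← hend]
  exact .cons_concat _ h

theorem apply_add_of_map_range_four_mul {g : α → α} {N : ℕ}
    (h : (List.range (4 * N)).map a = (List.range N).map a ++ ((List.range N).map a).map g ++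
      ((List.range N).map a).map g ++ (List.range N).map a) {j : ℕ} (hj : j < N) :
    a (N + j) = g (a j) ∧ a (2 * N + j) = g (a j) ∧ a (3 * N + j) = a j := by
  rw [show 4 * N = N + N + N + N by ring] at h
  simp only [List.range_add, List.map_append, List.map_map] at h
  obtain ⟨h', h₃⟩ := List.append_inj' h (by simp)
  obtain ⟨h', h₂⟩ := List.append_inj' h' (by simp)
  obtain ⟨-, h₁⟩ := List.append_inj' h' (by simp)
  simp only [List.map_inj_left, List.mem_range, Function.comp_apply] at h₁ h₂ h₃
  refine ⟨h₁ j hj, ?_, ?_⟩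
  · rw [two_mul]; exact h₂ j hj
  · rw [show 3 * N = N + N + N by ring]; exact h₃ j hj

def IsABBABlock (a : ℕ → α) (k : ℕ) : Prop :=
  a (4 * k + 3) = a (4 * k) ∧ a (4 * k + 2) = a (4 * k + 1) ∧ a (4 * k) ≠ a (4 * k + 1)

theorem IsABBABlock.of_apply_eq {g : α → α} (hg : Function.Injective g) {k k' : ℕ}
    (hk' : IsABBABlock a k') (h : ∀ i < 4, a (4 * k + i) = g (a (4 * k' + i))) :
    IsABBABlock a k := by
  obtain ⟨h₃, h₂, h₁⟩ := hk'
  have h₀ : a (4 * k) = g (a (4 * k')) := h 0 (by norm_num)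
  refine ⟨?_, ?_, ?_⟩
  · rw [h 3 (by norm_num), h₀, h₃]
  · rw [h 2 (by norm_num), h 1 (by norm_num), h₂]
  · rw [h₀, h 1 (by norm_num)]
    exact hg.ne h₁

theorem InC.isABBABlock (hC : InC a) (k : ℕ) : IsABBABlock a k := by
  obtain ⟨c, f, w, hw₀, hstep, hne, hw⟩ := hC
  have quarters (n : ℕ) {j : ℕ} (hj : j < 4 ^ n) :
      a (4 ^ n + j) = f n (a j) ∧ a (2 * 4 ^ n + j) = f n (a j) ∧ a (3 * 4 ^ n + j) = a j := by
    refine apply_add_of_map_range_four_mul ?_ hj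
    rw [← pow_succ', ← hw, ← hw, hstep]
  suffices ∀ n, ∀ k < 4 ^ n, IsABBABlock a k from this k k (Nat.lt_pow_self (by norm_num))
  intro n
  induction n with
  | zero =>
    intro k hk
    obtain rfl : k = 0 := by simpa using hk
    obtain ⟨h₁, h₂, h₃⟩ := quarters 0 (j := 0) (by norm_num)
    simp only [pow_zero, mul_one, add_zero] at h₁ h₂ h₃
    have hc : a 0 = c := by simpa [hw₀] using (hw 0).symm
    have hfc : f 0 c ≠ c := by simpa [hw₀] using hne 0
    refine ⟨h₃, h₂.trans h₁.symm, ?_⟩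
    simpa [h₁, hc] using hfc.symm
  | succ n ih =>
    intro k hk
    obtain ⟨q, k', hq, hk', rfl⟩ : ∃ q k', q < 4 ∧ k' < 4 ^ n ∧ k = q * 4 ^ n + k' :=
      ⟨k / 4 ^ n, k % 4 ^ n, Nat.div_lt_of_lt_mul (by rwa [pow_succ] at hk),
        Nat.mod_lt _ (by positivity), (Nat.div_add_mod' k (4 ^ n)).symm⟩
    have hpos (i : ℕ) : 4 * (q * 4 ^ n + k') + i = q * 4 ^ (n + 1) + (4 * k' + i) := by ring
    have hj (i : ℕ) (hi : i < 4) : 4 * k' + i < 4 ^ (n + 1) := by rw [pow_succ]; omega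
    interval_cases q
    · simpa using ih k' hk'
    · refine (ih k' hk').of_apply_eq (f (n + 1)).injective fun i hi => ?_
      rw [hpos, one_mul]; exact (quarters (n + 1) (hj i hi)).1
    · refine (ih k' hk').of_apply_eq (f (n + 1)).injective fun i hi => ?_
      rw [hpos]; exact (quarters (n + 1) (hj i hi)).2.1
    · refine (ih k' hk').of_apply_eq Function.injective_id fun i hi => ?_
      rw [hpos]; exact (quarters (n + 1) (hj i hi)).2.2

section Blocks

variable (hB : ∀ k, IsABBABlock a k)
include hB

theorem apply_eq_apply_of_mirror_in_block {m n : ℕ} (hdiv : m / 4 = n / 4)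
    (hmod : m % 4 + n % 4 = 3) : a m = a n := by
  obtain ⟨k, hk⟩ : ∃ k, m / 4 = k := ⟨_, rfl⟩
  obtain ⟨h₃, h₂, -⟩ := hB k
  rcases (by omega : m = 4 * k ∧ n = 4 * k + 3 ∨ m = 4 * k + 1 ∧ n = 4 * k + 2 ∨
      m = 4 * k + 2 ∧ n = 4 * k + 1 ∨ m = 4 * k + 3 ∧ n = 4 * k) with
    ⟨rfl, rfl⟩ | ⟨rfl, rfl⟩ | ⟨rfl, rfl⟩ | ⟨rfl, rfl⟩
  exacts [h₃.symm, h₂.symm, h₂, h₃]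

theorem apply_ne_apply_succ_of_even {m : ℕ} (hm : Even m) : a m ≠ a (m + 1) := by
  obtain ⟨k, hk⟩ : ∃ k, m / 4 = k := ⟨_, rfl⟩
  obtain ⟨h₃, h₂, h₁⟩ := hB k
  rcases (by grind : m = 4 * k ∨ m = 4 * k + 2) with rfl | rfl
  · exact h₁
  · rw [h₂, h₃]; exact h₁.symm

theorem four_dvd_of_factor_palindrome (hpal : (factor a x y).Palindrome) (heven : Even y)
    (hy : 2 ≤ y) : 4 ∣ 2 * x + y := by
  obtain ⟨l, rfl⟩ := heven
  by_contra hndvd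
  refine apply_ne_apply_succ_of_even hB (m := x + l - 1) ?_
    (apply_eq_apply_of_factor_palindrome hpal (by omega) (by omega) (by omega))
  rw [Nat.even_iff]; omega

theorem factor_palindrome_extend (hpal : (factor a (x + 1) y).Palindrome) (hy : 0 < y)
    (hdvd : 4 ∣ 2 * x + y + 2) (hx : x % 4 = 0 ∨ x % 4 = 1) :
    (factor a x (y + 2)).Palindrome := by
  refine factor_palindrome_cons_concat hpal ?_
  have mirror {m n : ℕ} := apply_eq_apply_of_mirror_in_block hB (m := m) (n := n)
  have pal {m n : ℕ} := apply_eq_apply_of_factor_palindrome hpal (m := m) (n := n)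
  rcases (by omega : x % 4 = 0 ∧ y = 2 ∨ x % 4 = 0 ∧ 2 < y ∨ x % 4 = 1) with
    ⟨hx, rfl⟩ | ⟨hx, hy⟩ | hx
  · exact mirror (by omega) (by omega)
  · calc a x = a (x + 3) := mirror (by omega) (by omega)
      _ = a (x + y - 2) := pal (by omega) (by omega) (by omega)
      _ = a (x + y + 1) := mirror (by omega) (by omega)
  · calc a x = a (x + 1) := mirror (by omega) (by omega)
      _ = a (x + y) := pal (by omega) (by omega) (by omega)
      _ = a (x + y + 1) := mirror (by omega) (by omega)

theorem factor_palindrome_extend_to_block (hpal : (factor a x y).Palindrome) (hy : 0 < y)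
    (hdvd : 4 ∣ 2 * x + y) (hx : x % 4 ≠ 3) :
    (factor a (4 * (x / 4)) (y + 2 * (x % 4))).Palindrome := by
  obtain ⟨k, e, he, rfl⟩ : ∃ k e, e < 3 ∧ x = 4 * k + e := ⟨x / 4, x % 4, by omega, by omega⟩
  rw [show 4 * ((4 * k + e) / 4) = 4 * k by omega, show (4 * k + e) % 4 = e by omega]
  interval_cases e
  · exact hpal
  · exact factor_palindrome_extend hB hpal hy (by omega) (by omega)
  · have hpal' := factor_palindrome_extend hB (x := 4 * k + 1) hpal hy (by omega) (by omega)
    exact factor_palindrome_extend hB hpal' (by omega) (by omega) (by omega)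

end Blocks

end

theorem stmt2 {α : Type*} (a : ℕ → α) (hC : InC a) (x y : ℕ)
    (hpal : (factor a x y).Palindrome) (heven : Even y) (hy : 2 ≤ y) :
    (∃ z r : ℕ, (factor a (4 * z) (4 * r)).Palindrome ∧ EmbedCenter x y z r) ∨
    (x % 4 = 3 ∧ y % 4 = 2) := by
  have hB := hC.isABBABlock
  have hdvd := four_dvd_of_factor_palindrome hB hpal heven hy
  by_cases hx : x % 4 = 3
  · exact Or.inr ⟨hx, by omega⟩
  refine Or.inl ⟨x / 4, (y + 2 * (x % 4)) / 4, ?_, by unfold EmbedCenter; omega⟩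
  rw [show 4 * ((y + 2 * (x % 4)) / 4) = y + 2 * (x % 4) by omega]
  exact factor_palindrome_extend_to_block hB hpal (by omega) hdvd hx
end

section
/- Let a : ℕ → α be a sequence in the class 𝒞 and let w_a(0, s) be a prefix of a. Suppose w_a(0, s) = p_1 p_2 ⋯ p_r is an optimal palindromic decomposition (so r = P_a(s)) such that each p_i either has length 1 or, occurring at its position inside the prefix, is embedded into the center of a palindromic factor of the form w_a(4z, 4t). Then w_a(0, s) admits an optimal palindromic decomposition of at least one of the following forms, where each q_i is a palindrome whose length is divisible by 4, each t_i is a single letter, and each l_i is a palindrome of even length: (i) q_1⋯q_r, in which case s ≡ 0 (mod 4); (ii) q_1⋯q_{r−1} t_1, in which case s ≡ 1 (mod 4); (iii) q_1⋯q_{r−2} t_1 t_2, in which case s ≡ 2 (mod 4); (iv) q_1⋯q_{r−2} t_1 l_1, in which case s ≡ 3 (mod 4); (v) q_1⋯q_{r−3} t_1 t_2 l_1, in which case s ≡ 2 (mod 4). -/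
/-!
Every aligned block `a(4k) ⋯ a(4k+3)` is the image of `w₁ = c f₀(c) f₀(c) c` under a bijection,
hence a palindrome. Read the given decomposition from left to right, keeping a cut point
`b ≡ 0 (mod 4)` within distance 3 of the current position `x`. A centred piece has its centre at
an even position, so the palindrome from `b` to the mirror image of `b` about that centre ends at
a multiple of 4 again and replaces the piece; a letter is skipped or, when it completes a block,
the block is cut off. The number of palindromes produced stays within the number of pieces read
plus `min |b - x| 2`, which is what the short tails of forms (ii)–(v) need at the end of the word.
Optimality of the given decomposition turns the resulting bound into an equality.
-/

section

variable {α : Type*}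

@[simp]
theorem factor_length (a : ℕ → α) (x n : ℕ) : (factor a x n).length = n := by
  simp [factor]

theorem factor_add (a : ℕ → α) (x m n : ℕ) :
    factor a x (m + n) = factor a x m ++ factor a (x + m) n := by
  simp only [factor, List.range_add, List.map_append, List.map_map]
  congr 1
  exact List.map_congr_left fun i _ => by simp [add_assoc]

theorem factor_eq_map_factor_iff (a : ℕ → α) (g : α → α) (x y n : ℕ) :
    factor a x n = (factor a y n).map g ↔ ∀ t < n, a (x + t) = g (a (y + t)) := by
  simp [factor, List.map_map, List.map_inj_left]

theorem palindrome_factor_iff (a : ℕ → α) (x n : ℕ) :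
    (factor a x n).Palindrome ↔ ∀ i < n, a (x + i) = a (x + (n - 1 - i)) := by
  rw [List.Palindrome.iff_reverse_eq, List.ext_get_iff]
  simp [factor, List.getElem_reverse, eq_comm]

theorem palindrome_factor_of_concentric {a : ℕ → α} {L n u m : ℕ}
    (h : (factor a L n).Palindrome) (hL : L ≤ u) (hc : 2 * u + m = 2 * L + n) :
    (factor a u m).Palindrome := by
  rw [palindrome_factor_iff] at h ⊢
  intro i hi
  have := h (u - L + i) (by omega)
  rwa [show L + (u - L + i) = u + i by omega,
    show L + (n - 1 - (u - L + i)) = u + (m - 1 - i) by omega] at this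

theorem exists_equiv_quarter {a : ℕ → α} (hC : InC a) (n : ℕ) {q : ℕ} (hq : q < 4) :
    ∃ g : α ≃ α, factor a (q * 4 ^ n) (4 ^ n) = (factor a 0 (4 ^ n)).map g := by
  obtain ⟨c, f, w, -, hrec, -, hw⟩ := hC
  have hfactor : ∀ m, w m = factor a 0 (4 ^ m) := fun m => by simp [hw, factor]
  have hsplit := hrec n
  rw [hfactor, hfactor, pow_succ, show 4 ^ n * 4 = 4 ^ n + 4 ^ n + 4 ^ n + 4 ^ n by ring,
    factor_add, factor_add, factor_add] at hsplit
  obtain ⟨h₁, h₃⟩ := List.append_inj' hsplit (by simp)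
  obtain ⟨h₁, h₂⟩ := List.append_inj' h₁ (by simp)
  obtain ⟨-, h₁⟩ := List.append_inj' h₁ (by simp)
  simp only [zero_add] at h₁ h₂ h₃
  interval_cases q
  · exact ⟨Equiv.refl α, by simp⟩
  · exact ⟨f n, by simpa using h₁⟩
  · exact ⟨f n, by rwa [two_mul]⟩
  · exact ⟨Equiv.refl α, by simpa [show 3 * 4 ^ n = 4 ^ n + 4 ^ n + 4 ^ n by ring] using h₃⟩

theorem exists_equiv_block {a : ℕ → α} (hC : InC a) (k : ℕ) :
    ∃ g : α ≃ α, factor a (4 * k) 4 = (factor a 0 4).map g := by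
  induction k using Nat.strong_induction_on with
  | _ k ih =>
  rcases Nat.eq_zero_or_pos k with rfl | hk
  · exact ⟨Equiv.refl α, by simp⟩
  set N := 4 ^ (Nat.log 4 k + 1)
  have hN : N ≤ 4 * k ∧ 4 * k < 4 * N := by
    have := Nat.pow_log_le_self 4 hk.ne'
    have := Nat.lt_pow_succ_log_self (by norm_num : 1 < 4) k
    constructor <;> simp only [N, pow_succ] at * <;> omega
  have hN4 : 4 ∣ N := dvd_pow_self 4 (Nat.succ_ne_zero _)
  obtain ⟨k', hk'⟩ : 4 ∣ 4 * k % N := (Nat.dvd_mod_iff hN4).2 (dvd_mul_right 4 k)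
  have hmod := Nat.mod_lt (4 * k) (by omega : 0 < N)
  have hdiv := Nat.div_add_mod' (4 * k) N
  obtain ⟨g, hg⟩ := exists_equiv_quarter hC (Nat.log 4 k + 1)
    ((Nat.div_lt_iff_lt_mul (by omega)).2 hN.2)
  obtain ⟨g', hg'⟩ := ih k' (by omega)
  refine ⟨g'.trans g, (factor_eq_map_factor_iff _ _ _ _ _).2 fun j hj => ?_⟩
  rw [factor_eq_map_factor_iff] at hg hg'
  obtain ⟨u, hu⟩ := hN4
  calc a (4 * k + j) = a (4 * k / N * N + (4 * k' + j)) := by congr 1; omega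
    _ = g (a (4 * k' + j)) := by rw [hg _ (by omega), zero_add]
    _ = (g'.trans g) (a (0 + j)) := by rw [hg' j hj]; rfl

theorem palindrome_factor_of_four_dvd {a : ℕ → α} (hC : InC a) {x : ℕ} (hx : 4 ∣ x) :
    (factor a x 4).Palindrome := by
  obtain ⟨k, rfl⟩ := hx
  obtain ⟨g, hg⟩ := exists_equiv_block hC k
  rw [hg]
  refine List.Palindrome.map _ ?_
  obtain ⟨c, f, w, h0, hrec, -, hw⟩ := hC
  rw [show factor a 0 4 = w 1 by simp [hw, factor], hrec 0, h0]
  exact List.Palindrome.of_reverse_eq (by simp)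

@[simp]
theorem palindrome_factor_one (a : ℕ → α) (x : ℕ) : (factor a x 1).Palindrome := by
  simpa [factor] using List.Palindrome.singleton (a x)

theorem palLen_le {w : List α} {ps : List (List α)} (hpal : ∀ p ∈ ps, p.Palindrome)
    (hflat : ps.flatten = w) : palLen w ≤ ps.length :=
  Nat.sInf_le ⟨ps, rfl, hpal, hflat⟩

def cutWords (a : ℕ → α) : ℕ → List ℕ → List (List α)
  | _, [] => []
  | x, n :: ns => factor a x n :: cutWords a (x + n) ns

theorem flatten_cutWords (a : ℕ → α) (x : ℕ) (ns : List ℕ) :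
    (cutWords a x ns).flatten = factor a x ns.sum := by
  induction ns generalizing x with
  | nil => simp [cutWords, factor]
  | cons n ns ih => simp [cutWords, ih, factor_add]

@[simp]
theorem map_length_cutWords (a : ℕ → α) (x : ℕ) (ns : List ℕ) :
    (cutWords a x ns).map List.length = ns := by
  induction ns generalizing x with
  | nil => rfl
  | cons n ns ih => simp [cutWords, ih]

@[simp]
theorem length_cutWords (a : ℕ → α) (x : ℕ) (ns : List ℕ) :
    (cutWords a x ns).length = ns.length := by
  rw [← List.length_map List.length, map_length_cutWords]

-- The length patterns of the final tails in the forms (i)–(v).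
inductive AdmissibleTail : List ℕ → Prop
  | nil : AdmissibleTail []
  | letter : AdmissibleTail [1]
  | letters : AdmissibleTail [1, 1]
  | letter_even {n : ℕ} : n % 4 = 2 → AdmissibleTail [1, n]
  | letters_even {n : ℕ} : n % 4 = 0 → AdmissibleTail [1, 1, n]

def Admissible (ns : List ℕ) : Prop :=
  ∃ ms tl, ns = ms ++ tl ∧ (∀ m ∈ ms, 4 ∣ m) ∧ AdmissibleTail tl

theorem AdmissibleTail.admissible {tl : List ℕ} (h : AdmissibleTail tl) : Admissible tl :=
  ⟨[], tl, rfl, by simp, h⟩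

theorem Admissible.cons {n : ℕ} {ns : List ℕ} (hn : 4 ∣ n) (h : Admissible ns) :
    Admissible (n :: ns) := by
  obtain ⟨ms, tl, rfl, hms, htl⟩ := h
  exact ⟨n :: ms, tl, rfl, by simpa [hn] using hms, htl⟩

theorem Admissible.forms {qs : List (List α)} (h : Admissible (qs.map List.length)) :
    ((∀ q ∈ qs, 4 ∣ q.length) ∧ (qs.map List.length).sum % 4 = 0) ∨
    (∃ qs' t₁, qs = qs' ++ [t₁] ∧ (∀ q ∈ qs', 4 ∣ q.length) ∧
      t₁.length = 1 ∧ (qs.map List.length).sum % 4 = 1) ∨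
    (∃ qs' t₁ t₂, qs = qs' ++ [t₁, t₂] ∧ (∀ q ∈ qs', 4 ∣ q.length) ∧
      t₁.length = 1 ∧ t₂.length = 1 ∧ (qs.map List.length).sum % 4 = 2) ∨
    (∃ qs' t₁ l₁, qs = qs' ++ [t₁, l₁] ∧ (∀ q ∈ qs', 4 ∣ q.length) ∧
      t₁.length = 1 ∧ 2 ∣ l₁.length ∧ (qs.map List.length).sum % 4 = 3) ∨
    (∃ qs' t₁ t₂ l₁, qs = qs' ++ [t₁, t₂, l₁] ∧ (∀ q ∈ qs', 4 ∣ q.length) ∧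
      t₁.length = 1 ∧ t₂.length = 1 ∧ 2 ∣ l₁.length ∧ (qs.map List.length).sum % 4 = 2) := by
  obtain ⟨ms, tl, hsplit, hms, htl⟩ := h
  obtain ⟨qs', qs₂, rfl, rfl, rfl⟩ := List.map_eq_append_iff.1 hsplit
  have hqs' : ∀ q ∈ qs', 4 ∣ q.length := fun q hq => hms _ (List.mem_map_of_mem hq)
  have hsum : 4 ∣ (qs'.map List.length).sum := List.dvd_sum hms
  generalize hq₂ : qs₂.map List.length = tl at htl
  cases htl with
  | nil =>
    obtain rfl := List.map_eq_nil_iff.1 hq₂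
    left
    simpa using ⟨hqs', by omega⟩
  | letter =>
    obtain ⟨t₁, _, rfl, ht₁, h⟩ := List.map_eq_cons_iff.1 hq₂
    obtain rfl := List.map_eq_nil_iff.1 h
    right; left
    exact ⟨qs', t₁, rfl, hqs', ht₁, by simp [ht₁]; omega⟩
  | letters =>
    obtain ⟨t₁, _, rfl, ht₁, h⟩ := List.map_eq_cons_iff.1 hq₂
    obtain ⟨t₂, _, rfl, ht₂, h⟩ := List.map_eq_cons_iff.1 h
    obtain rfl := List.map_eq_nil_iff.1 h
    right; right; left
    exact ⟨qs', t₁, t₂, rfl, hqs', ht₁, ht₂, by simp [ht₁, ht₂]; omega⟩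
  | letter_even hn =>
    obtain ⟨t₁, _, rfl, ht₁, h⟩ := List.map_eq_cons_iff.1 hq₂
    obtain ⟨l₁, _, rfl, hl₁, h⟩ := List.map_eq_cons_iff.1 h
    obtain rfl := List.map_eq_nil_iff.1 h
    right; right; right; left
    exact ⟨qs', t₁, l₁, rfl, hqs', ht₁, by omega, by simp [ht₁, hl₁]; omega⟩
  | letters_even hn =>
    obtain ⟨t₁, _, rfl, ht₁, h⟩ := List.map_eq_cons_iff.1 hq₂
    obtain ⟨t₂, _, rfl, ht₂, h⟩ := List.map_eq_cons_iff.1 h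
    obtain ⟨l₁, _, rfl, hl₁, h⟩ := List.map_eq_cons_iff.1 h
    obtain rfl := List.map_eq_nil_iff.1 h
    right; right; right; right
    exact ⟨qs', t₁, t₂, l₁, rfl, hqs', ht₁, ht₂, by omega, by simp [ht₁, ht₂, hl₁]; omega⟩

def IsLetterOrCentered (a : ℕ → α) (x y : ℕ) : Prop :=
  y = 1 ∨ ∃ z t : ℕ, (factor a (4 * z) (4 * t)).Palindrome ∧ EmbedCenter x y z t

def AdmissibleCut (a : ℕ → α) (x s k : ℕ) : Prop :=
  ∃ ns : List ℕ, x + ns.sum = s ∧ ns.length ≤ k ∧ Admissible ns ∧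
    ∀ w ∈ cutWords a x ns, w.Palindrome

theorem AdmissibleCut.mono {a : ℕ → α} {x s k k' : ℕ} (h : AdmissibleCut a x s k)
    (hk : k ≤ k') : AdmissibleCut a x s k' := by
  obtain ⟨ns, hsum, hlen, hadm, hpal⟩ := h
  exact ⟨ns, hsum, hlen.trans hk, hadm, hpal⟩

theorem AdmissibleCut.cons {a : ℕ → α} {x n s k : ℕ} (h : AdmissibleCut a (x + n) s k)
    (hn : 4 ∣ n) (hpal : (factor a x n).Palindrome) : AdmissibleCut a x s (k + 1) := by
  obtain ⟨ns, hsum, hlen, hadm, hpals⟩ := h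
  refine ⟨n :: ns, by simp; omega, by simpa, hadm.cons hn, ?_⟩
  simpa [cutWords, hpal] using hpals

theorem admissibleCut_of_le_add_three {a : ℕ → α}
    (hblk : ∀ x, 4 ∣ x → (factor a x 4).Palindrome) {x s : ℕ} (hx : 4 ∣ x) (hxs : x ≤ s)
    (hs : s ≤ x + 3) : AdmissibleCut a x s (min (s - x) 2) := by
  obtain ⟨g, rfl⟩ := Nat.exists_eq_add_of_le hxs
  have : g ≤ 3 := by omega
  interval_cases g
  · exact ⟨[], by simp, by simp, AdmissibleTail.nil.admissible, by simp [cutWords]⟩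
  · exact ⟨[1], by simp, by simp, AdmissibleTail.letter.admissible, by simp [cutWords]⟩
  · exact ⟨[1, 1], by simp, by simp, AdmissibleTail.letters.admissible, by simp [cutWords]⟩
  · refine ⟨[1, 2], by simp, by simp, (AdmissibleTail.letter_even rfl).admissible, ?_⟩
    simpa [cutWords] using palindrome_factor_of_concentric (hblk x hx) (u := x + 1) (by omega)
      (by omega)

theorem admissibleCut_of_palindrome {a : ℕ → α}
    (hblk : ∀ x, 4 ∣ x → (factor a x 4).Palindrome) {x u s : ℕ} (hx : 4 ∣ x) (hxu : x < u)
    (hu : u ≤ x + 3) (hus : u ≤ s) (h4 : 4 ∣ u + s) (hpal : (factor a u (s - u)).Palindrome) :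
    AdmissibleCut a x s (1 + min (u - x) 2) := by
  obtain ⟨g, rfl⟩ := Nat.exists_eq_add_of_le hxu.le
  have : 0 < g := by omega
  have : g ≤ 3 := by omega
  interval_cases g
  · refine ⟨[1, s - (x + 1)], by simp; omega, by simp,
      (AdmissibleTail.letter_even (by omega)).admissible, ?_⟩
    simpa [cutWords] using hpal
  · refine ⟨[1, 1, s - (x + 2)], by simp; omega, by simp,
      (AdmissibleTail.letters_even (by omega)).admissible, ?_⟩
    simpa [cutWords, add_assoc] using hpal
  · have hcore := palindrome_factor_of_concentric hpal (u := x + 4) (m := s - (x + 3) - 2)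
      (by omega) (by omega)
    refine ⟨[4, s - (x + 3) - 2, 1], by simp; omega, by simp,
      (AdmissibleTail.letter.admissible.cons (by omega)).cons (by norm_num), ?_⟩
    simp [cutWords, hblk x hx, hcore]

theorem admissibleCut_of_pieces {a : ℕ → α}
    (hblk : ∀ x, 4 ∣ x → (factor a x 4).Palindrome) {s : ℕ} (ys : List ℕ) (x b : ℕ)
    (hpieces : ∀ i (hi : i < ys.length), IsLetterOrCentered a (x + (ys.take i).sum) ys[i])
    (hs : x + ys.sum = s) (hb : 4 ∣ b) (hbs : b ≤ s) (hxb : x ≤ b + 3) (hbx : b ≤ x + 3) :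
    AdmissibleCut a b s (ys.length + min (Nat.dist b x) 2) := by
  induction ys generalizing x b with
  | nil =>
    simp only [List.sum_nil, add_zero] at hs
    exact (admissibleCut_of_le_add_three hblk hb hbs (by omega)).mono
      (by unfold Nat.dist; omega)
  | cons y ys ih =>
    simp only [List.sum_cons] at hs
    have ih' := fun b => ih (x + y) b (fun i hi => by
      have := hpieces (i + 1) (by simpa using hi)
      simp only [List.take_succ_cons, List.sum_cons, List.getElem_cons_succ] at this
      rwa [← add_assoc] at this) (by omega)
    simp only [List.length_cons]
    rcases hpieces 0 (by simp) with hy | ⟨z, t, hzt, hzx, hxt, hc⟩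
    · simp only [List.getElem_cons_zero] at hy
      subst hy
      by_cases hxb3 : x = b + 3
      · exact ((ih' (b + 4) (by omega) (by omega) (by omega) (by omega)).cons (by norm_num)
          (hblk b hb)).mono (by unfold Nat.dist; omega)
      · exact (ih' b hb hbs (by omega) (by omega)).mono (by unfold Nat.dist; omega)
    · simp only [List.take_zero, List.sum_nil, add_zero, List.getElem_cons_zero] at hzx hxt hc
      -- `2 * x + y` is twice the centre of the piece, and a multiple of 4
      by_cases hskip : 2 * x + y ≤ 2 * b
      · exact (ih' b hb hbs (by omega) (by omega)).mono (by unfold Nat.dist; omega)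
      by_cases hfits : 2 * x + y - b ≤ s
      · have hcut := ih' (2 * x + y - b) (by omega) hfits (by omega) (by omega)
        rw [show 2 * x + y - b = b + (2 * x + y - 2 * b) by omega] at hcut
        exact (hcut.cons (by omega) (palindrome_factor_of_concentric hzt (by omega)
          (by omega))).mono (by unfold Nat.dist; omega)
      · exact (admissibleCut_of_palindrome hblk (u := 2 * x + y - s) hb (by omega) (by omega)
          (by omega) (by omega)
          (palindrome_factor_of_concentric hzt (by omega) (by omega))).mono
          (by unfold Nat.dist; omega)

end

theorem stmt3_general {α : Type*} (a : ℕ → α) (hC : InC a) (s : ℕ)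
    (ps : List (List α)) (r : ℕ)
    (hjoin : ps.flatten = prefixWord a s)
    (hlen : ps.length = r)
    (hopt : r = P a s)
    (hshape : ∀ i (hi : i < ps.length),
      (ps.get ⟨i, hi⟩).length = 1 ∨
      ∃ z t : ℕ, (factor a (4 * z) (4 * t)).Palindrome ∧
        EmbedCenter (((ps.take i).map List.length).sum) (ps.get ⟨i, hi⟩).length z t) :
    ∃ qs : List (List α),
      qs.flatten = prefixWord a s ∧ qs.length = r ∧ (∀ q ∈ qs, q.Palindrome) ∧
      (((∀ q ∈ qs, 4 ∣ q.length) ∧ s % 4 = 0) ∨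
       (∃ qs' t₁, qs = qs' ++ [t₁] ∧ (∀ q ∈ qs', 4 ∣ q.length) ∧
          t₁.length = 1 ∧ s % 4 = 1) ∨
       (∃ qs' t₁ t₂, qs = qs' ++ [t₁, t₂] ∧ (∀ q ∈ qs', 4 ∣ q.length) ∧
          t₁.length = 1 ∧ t₂.length = 1 ∧ s % 4 = 2) ∨
       (∃ qs' t₁ l₁, qs = qs' ++ [t₁, l₁] ∧ (∀ q ∈ qs', 4 ∣ q.length) ∧
          t₁.length = 1 ∧ 2 ∣ l₁.length ∧ s % 4 = 3) ∨
       (∃ qs' t₁ t₂ l₁, qs = qs' ++ [t₁, t₂, l₁] ∧ (∀ q ∈ qs', 4 ∣ q.length) ∧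
          t₁.length = 1 ∧ t₂.length = 1 ∧ 2 ∣ l₁.length ∧ s % 4 = 2)) := by
  have hs : (ps.map List.length).sum = s := by
    simpa [prefixWord] using congrArg List.length hjoin
  have hpieces : ∀ i (hi : i < (ps.map List.length).length),
      IsLetterOrCentered a (0 + ((ps.map List.length).take i).sum) (ps.map List.length)[i] :=
    fun i hi => by simpa [IsLetterOrCentered, ← List.map_take] using hshape i (by simpa using hi)
  obtain ⟨ns, hsum, hle, hadm, hpals⟩ :=
    admissibleCut_of_pieces (fun _ => palindrome_factor_of_four_dvd hC) _ 0 0 hpieces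
      (by simpa using hs) (dvd_zero 4) (Nat.zero_le s) (by omega) (by omega)
  have hflat : (cutWords a 0 ns).flatten = prefixWord a s := by
    rw [flatten_cutWords, prefixWord, ← hsum, zero_add]
  have hlen' : (cutWords a 0 ns).length = r := by
    have hr : r ≤ (cutWords a 0 ns).length := hopt ▸ palLen_le hpals hflat
    simp only [length_cutWords] at hr ⊢
    simp only [List.length_map, Nat.dist_self, Nat.zero_min, add_zero] at hle
    omega
  have hforms := Admissible.forms (qs := cutWords a 0 ns) (by rwa [map_length_cutWords])
  rw [map_length_cutWords, ← zero_add ns.sum, hsum] at hforms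
  exact ⟨cutWords a 0 ns, hflat, hlen', hpals, hforms⟩

theorem stmt3 {α : Type*} (a : ℕ → α) (hC : InC a) (s : ℕ)
    (ps : List (List α)) (r : ℕ)
    (hjoin : ps.flatten = prefixWord a s)
    (hlen : ps.length = r)
    (hopt : r = P a s)
    (hpal : ∀ p ∈ ps, p.Palindrome)
    (hshape : ∀ i (hi : i < ps.length),
      (ps.get ⟨i, hi⟩).length = 1 ∨
      ∃ z t : ℕ, (factor a (4 * z) (4 * t)).Palindrome ∧
        EmbedCenter (((ps.take i).map List.length).sum) (ps.get ⟨i, hi⟩).length z t) :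
    ∃ qs : List (List α),
      qs.flatten = prefixWord a s ∧ qs.length = r ∧ (∀ q ∈ qs, q.Palindrome) ∧
      (((∀ q ∈ qs, 4 ∣ q.length) ∧ s % 4 = 0) ∨
       (∃ qs' t₁, qs = qs' ++ [t₁] ∧ (∀ q ∈ qs', 4 ∣ q.length) ∧
          t₁.length = 1 ∧ s % 4 = 1) ∨
       (∃ qs' t₁ t₂, qs = qs' ++ [t₁, t₂] ∧ (∀ q ∈ qs', 4 ∣ q.length) ∧
          t₁.length = 1 ∧ t₂.length = 1 ∧ s % 4 = 2) ∨
       (∃ qs' t₁ l₁, qs = qs' ++ [t₁, l₁] ∧ (∀ q ∈ qs', 4 ∣ q.length) ∧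
          t₁.length = 1 ∧ 2 ∣ l₁.length ∧ s % 4 = 3) ∨
       (∃ qs' t₁ t₂ l₁, qs = qs' ++ [t₁, t₂, l₁] ∧ (∀ q ∈ qs', 4 ∣ q.length) ∧
          t₁.length = 1 ∧ t₂.length = 1 ∧ 2 ∣ l₁.length ∧ s % 4 = 2)) :=
  stmt3_general a hC s ps r hjoin hlen hopt hshape
end

section
/- Let a : ℕ → α be a sequence in the class 𝒞. Then every prefix w_a(0, k) of a admits an optimal palindromic decomposition w_a(0, k) = p_1 p_2 ⋯ p_s (with s = P_a(k)) such that no p_i has length 3 and, furthermore, every p_i of even length, occurring at its position inside the prefix, is embedded into the center of a palindromic factor of the form w_a(4z, 4r). -/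
/-!
Every sequence of `𝒞` is a concatenation of blocks `x y y x` with `x ≠ y` at the positions `4 j`:
the first block is `c (f₀ c) (f₀ c) c`, and every later block is the image of an earlier one under a
bijection. This rigidity leaves few palindromic factors: single letters, palindromes of length 3
starting at `2` or `3 mod 4`, and even palindromes centred at an even position. An even palindrome
that does not start at `3 mod 4` extends, with the same centre, to a palindrome aligned on blocks.

Looking at the last piece of an optimal decomposition, a simultaneous induction on `t` gives
`P(4t) < P(4t+1)`, `P(4t) < P(4t+2)`, `P(4t+4) < P(4t+3)` and `P(4t+4) < P(4t+2)`. These show that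
a last piece of length 3, or an even last piece starting at `3 mod 4`, can be replaced by an aligned
palindrome followed by a single letter without increasing the number of pieces.
-/

namespace PalLength

variable {α : Type*}

section Factor

variable (a : ℕ → α)

@[simp] lemma factor_length (x y : ℕ) : (factor a x y).length = y := by simp [factor]

@[simp] lemma factor_getElem (x y i : ℕ) (h : i < (factor a x y).length) :
    (factor a x y)[i] = a (x + i) := by simp [factor]

lemma factor_one (x : ℕ) : factor a x 1 = [a x] := by simp [factor]

lemma factor_add (x y z : ℕ) : factor a x (y + z) = factor a x y ++ factor a (x + y) z := by
  simp only [factor, List.range_add, List.map_append, List.map_map]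
  congr 1
  exact List.map_congr_left fun i _ => by simp [Nat.add_assoc]

lemma prefixWord_add (m k : ℕ) : prefixWord a (m + k) = prefixWord a m ++ factor a m k := by
  simp [prefixWord, factor_add]

@[simp] lemma prefixWord_length (n : ℕ) : (prefixWord a n).length = n := by simp [prefixWord]

lemma factor_eq_map_iff (x x' y : ℕ) (f : α → α) :
    factor a x y = (factor a x' y).map f ↔ ∀ i < y, a (x + i) = f (a (x' + i)) := by
  simp [factor, List.map_inj_left]

lemma factor_palindrome_iff (x y : ℕ) :
    (factor a x y).Palindrome ↔ ∀ i < y, a (x + i) = a (x + (y - 1 - i)) := by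
  rw [List.Palindrome.iff_reverse_eq, List.ext_getElem_iff]
  simp only [List.length_reverse, factor_length, List.getElem_reverse, factor_getElem, true_and]
  exact ⟨fun h i hi => (h i hi hi).symm, fun h i hi _ => (h i hi).symm⟩

variable {a}

lemma factor_palindrome_of_centered {x y x' y' : ℕ} (h : (factor a x y).Palindrome)
    (hx : x ≤ x') (hy : x' + y' ≤ x + y) (hc : x' - x = x + y - (x' + y')) :
    (factor a x' y').Palindrome := by
  rw [factor_palindrome_iff] at h ⊢
  intro i hi
  have := h (x' - x + i) (by omega)
  rwa [show x + (x' - x + i) = x' + i by omega,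
    show x + (y - 1 - (x' - x + i)) = x' + (y' - 1 - i) by omega] at this

lemma factor_palindrome_extend {x y : ℕ} (h : (factor a (x + 1) y).Palindrome)
    (hx : a x = a (x + y + 1)) : (factor a x (y + 2)).Palindrome := by
  rw [factor_palindrome_iff] at h ⊢
  intro i hi
  rcases Nat.eq_zero_or_pos i with rfl | hi0
  · simpa [Nat.add_assoc] using hx
  by_cases hiy : i = y + 1
  · subst hiy; simpa [Nat.add_assoc] using hx.symm
  have := h (i - 1) (by omega)
  rwa [show x + 1 + (i - 1) = x + i by omega,
    show x + 1 + (y - 1 - (i - 1)) = x + (y + 2 - 1 - i) by omega] at this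

end Factor

lemma palLen_le {w : List α} {ps : List (List α)} (hf : ps.flatten = w)
    (hp : ∀ p ∈ ps, p.Palindrome) : palLen w ≤ ps.length :=
  Nat.sInf_le ⟨ps, rfl, hp, hf⟩

lemma exists_optimal_decomposition (w : List α) : ∃ ps : List (List α),
    ps.length = palLen w ∧ (∀ p ∈ ps, p.Palindrome) ∧ ps.flatten = w := by
  refine Nat.sInf_mem (s := {k | ∃ ps : List (List α), ps.length = k ∧ (∀ p ∈ ps, p.Palindrome) ∧
    ps.flatten = w}) ⟨w.length, w.map ([·]), by simp, by simp [List.Palindrome.singleton], ?_⟩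
  induction w with
  | nil => rfl
  | cons c w ih => simpa using ih

lemma palLen_append_le {w p : List α} (hp : p.Palindrome) :
    palLen (w ++ p) ≤ palLen w + 1 := by
  obtain ⟨ps, hlen, hpal, hflat⟩ := exists_optimal_decomposition w
  have hpal' : ∀ q ∈ ps ++ [p], q.Palindrome := by
    simpa [or_imp, forall_and, hp] using hpal
  simpa [hlen] using palLen_le (ps := ps ++ [p]) (by simp [hflat]) hpal'

lemma exists_append_palindrome {w : List α} (hw : w ≠ []) : ∃ v p : List α,
    w = v ++ p ∧ p ≠ [] ∧ p.Palindrome ∧ palLen v + 1 = palLen w := by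
  obtain ⟨ps, hlen, hpal, rfl⟩ := exists_optimal_decomposition w
  obtain ⟨qs, p, rfl⟩ := (List.eq_nil_or_concat' ps).resolve_left (by rintro rfl; simp at hw)
  simp only [List.mem_append, List.mem_singleton, or_imp, forall_and, forall_eq] at hpal
  have hqs : palLen qs.flatten ≤ qs.length := palLen_le rfl hpal.1
  have hle := palLen_append_le (w := qs.flatten) hpal.2
  simp only [List.length_append, List.length_singleton, List.flatten_append,
    List.flatten_singleton] at hlen ⊢
  refine ⟨qs.flatten, p, rfl, ?_, hpal.2, by omega⟩
  rintro rfl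
  simp only [List.append_nil] at hlen
  omega

section Prefix

variable {a : ℕ → α}

lemma P_le_of_palindrome {u y v : ℕ} (h : (factor a u y).Palindrome) (hv : u + y = v) :
    P a v ≤ P a u + 1 := by
  subst hv
  simpa [P, prefixWord_add] using palLen_append_le (w := prefixWord a u) h

lemma P_succ_le (n : ℕ) : P a (n + 1) ≤ P a n + 1 :=
  P_le_of_palindrome (by simpa [factor_one] using List.Palindrome.singleton (a n)) rfl

lemma exists_lt_P_of_pos {n : ℕ} (hn : 0 < n) :
    ∃ u < n, P a u < P a n ∧ (factor a u (n - u)).Palindrome := by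
  obtain ⟨v, p, hvp, hp, hpal, hlen⟩ :=
    exists_append_palindrome (w := prefixWord a n) (by simpa [← List.length_pos_iff] using hn)
  have hlv : v.length + p.length = n := by simpa using (congrArg List.length hvp).symm
  have hsplit := prefixWord_add a v.length p.length
  rw [hlv, hvp] at hsplit
  obtain ⟨hv, hpf⟩ := List.append_inj hsplit (by simp)
  refine ⟨v.length, by have := List.length_pos_iff.2 hp; omega, ?_, ?_⟩
  · change palLen (prefixWord a v.length) < palLen (prefixWord a n)
    rw [← hv]
    omega
  · rwa [← hlv, Nat.add_sub_cancel_left, ← hpf]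

end Prefix

section Blocks

def IsABBABlock (a : ℕ → α) (i : ℕ) : Prop :=
  a i = a (i + 3) ∧ a (i + 1) = a (i + 2) ∧ a i ≠ a (i + 1)

def ABBABlocks (a : ℕ → α) : Prop := ∀ j, IsABBABlock a (4 * j)

lemma IsABBABlock.of_equiv {a : ℕ → α} {i j : ℕ} (h : IsABBABlock a i) (φ : α ≃ α)
    (hφ : ∀ e < 4, a (j + e) = φ (a (i + e))) : IsABBABlock a j := by
  obtain ⟨h03, h12, h01⟩ := h
  have := hφ 0; have := hφ 1; have := hφ 2; have := hφ 3
  simp_all [IsABBABlock]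

lemma abbaBlocks_of_selfSimilar {a : ℕ → α} (h₀ : IsABBABlock a 0)
    (hs : ∀ n q, 0 < q → q < 4 → ∃ φ : α ≃ α, ∀ i < 4 ^ n, a (q * 4 ^ n + i) = φ (a i)) :
    ABBABlocks a := by
  suffices ∀ n j, 4 * j < 4 ^ (n + 1) → IsABBABlock a (4 * j) from
    fun j => this j j (by have := Nat.lt_pow_self (n := j) (show 1 < 4 by norm_num); grind)
  intro n
  induction n with
  | zero =>
    intro j hj
    obtain rfl : j = 0 := by omega
    simpa using h₀
  | succ n ih =>
    intro j hj
    by_cases hjN : 4 * j < 4 ^ (n + 1)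
    · exact ih j hjN
    have h4N : 4 ∣ 4 ^ (n + 1) := dvd_pow_self 4 n.succ_ne_zero
    obtain ⟨φ, hφ⟩ := hs (n + 1) (4 * j / 4 ^ (n + 1)) (Nat.div_pos (by omega) (by positivity))
      (Nat.div_lt_of_lt_mul (by rwa [pow_succ _ (n + 1)] at hj))
    obtain ⟨j', hj'⟩ : 4 ∣ 4 * j % 4 ^ (n + 1) := (Nat.dvd_mod_iff h4N).2 (dvd_mul_right 4 j)
    have hdiv := Nat.div_add_mod (4 * j) (4 ^ (n + 1))
    have hj'N : 4 * j' < 4 ^ (n + 1) := hj' ▸ Nat.mod_lt _ (by positivity)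
    refine (ih j' hj'N).of_equiv φ fun e he => ?_
    rw [← hφ (4 * j' + e) (by omega)]
    generalize 4 * j / 4 ^ (n + 1) = q at hdiv ⊢
    generalize 4 * j % 4 ^ (n + 1) = r at hdiv hj'
    rw [mul_comm] at hdiv
    congr 1
    omega

variable {a : ℕ → α}

lemma InC.exists_factor_eq (hC : InC a) : ∃ f : ℕ → α ≃ α, ∀ n,
    factor a (4 ^ n) (4 ^ n) = (factor a 0 (4 ^ n)).map (f n) ∧
    factor a (2 * 4 ^ n) (4 ^ n) = (factor a 0 (4 ^ n)).map (f n) ∧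
    factor a (3 * 4 ^ n) (4 ^ n) = factor a 0 (4 ^ n) ∧
    (factor a 0 (4 ^ n)).map (f n) ≠ factor a 0 (4 ^ n) := by
  obtain ⟨-, f, w, -, hrec, hne, hw⟩ := hC
  have hwf : ∀ n, w n = factor a 0 (4 ^ n) := fun n => by simp [hw, factor]
  refine ⟨f, fun n => ?_⟩
  have hsplit : factor a 0 (4 ^ (n + 1)) = factor a 0 (4 ^ n) ++ factor a (4 ^ n) (4 ^ n) ++
      factor a (2 * 4 ^ n) (4 ^ n) ++ factor a (3 * 4 ^ n) (4 ^ n) := by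
    rw [show 4 ^ (n + 1) = 4 ^ n + 4 ^ n + 4 ^ n + 4 ^ n by ring, factor_add, factor_add,
      factor_add]
    ring_nf
  have h := hrec n
  rw [hwf, hwf, hsplit] at h
  obtain ⟨h12, h3⟩ := List.append_inj' h (by simp)
  obtain ⟨h1', h2⟩ := List.append_inj' h12 (by simp)
  obtain ⟨-, h1⟩ := List.append_inj' h1' (by simp)
  exact ⟨h1, h2, h3, hwf n ▸ hne n⟩

lemma InC.isABBABlock_zero (hC : InC a) : IsABBABlock a 0 := by
  obtain ⟨f, hf⟩ := InC.exists_factor_eq hC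
  obtain ⟨h1, h2, h3, hne⟩ := hf 0
  simp only [pow_zero, mul_one, factor_one, List.map_cons, List.map_nil, List.cons.injEq,
    and_true, ne_eq] at h1 h2 h3 hne
  exact ⟨h3.symm, h1.trans h2.symm, fun h => hne (h1.symm.trans (by simpa using h.symm))⟩

lemma InC.selfSimilar (hC : InC a) (n q : ℕ) (hq₀ : 0 < q) (hq₄ : q < 4) :
    ∃ φ : α ≃ α, ∀ i < 4 ^ n, a (q * 4 ^ n + i) = φ (a i) := by
  obtain ⟨f, hf⟩ := InC.exists_factor_eq hC
  obtain ⟨h1, h2, h3, -⟩ := hf n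
  interval_cases q
  · exact ⟨f n, by simpa [factor_eq_map_iff] using h1⟩
  · exact ⟨f n, by simpa [factor_eq_map_iff] using h2⟩
  · exact ⟨Equiv.refl α, by simpa using (factor_eq_map_iff a _ 0 _ id).1 (by simpa using h3)⟩

end Blocks

lemma InC.abbaBlocks {a : ℕ → α} (hC : InC a) : ABBABlocks a :=
  abbaBlocks_of_selfSimilar (InC.isABBABlock_zero hC) (InC.selfSimilar hC)

namespace ABBABlocks

variable {a : ℕ → α} (H : ABBABlocks a) {m : ℕ}
include H

lemma apply_eq_add_three (hm : m % 4 = 0) : a m = a (m + 3) := by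
  obtain ⟨q, rfl⟩ : ∃ q, m = 4 * q := ⟨m / 4, by omega⟩
  exact (H q).1

lemma apply_eq_succ (hm : m % 4 = 1) : a m = a (m + 1) := by
  obtain ⟨q, rfl⟩ : ∃ q, m = 4 * q + 1 := ⟨m / 4, by omega⟩
  exact (H q).2.1

lemma mod_four_of_eq_succ (h : a m = a (m + 1)) : m % 4 = 1 ∨ m % 4 = 3 := by
  obtain ⟨q, r, hr, rfl⟩ : ∃ q r, r < 4 ∧ m = 4 * q + r := ⟨m / 4, m % 4, by omega, by omega⟩
  obtain ⟨h03, h12, h01⟩ := H q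
  interval_cases r <;> grind

lemma mod_four_of_eq_add_two (h : a m = a (m + 2)) : m % 4 = 2 ∨ m % 4 = 3 := by
  obtain ⟨q, r, hr, rfl⟩ : ∃ q r, r < 4 ∧ m = 4 * q + r := ⟨m / 4, m % 4, by omega, by omega⟩
  obtain ⟨h03, h12, h01⟩ := H q
  interval_cases r <;> grind

variable {x y : ℕ}

lemma not_palindrome_of_odd (hodd : y % 2 = 1) (hy : 5 ≤ y) :
    ¬ (factor a x y).Palindrome := by
  intro hpal
  obtain ⟨b, hb⟩ : ∃ b, b + 2 = x + y / 2 := ⟨x + y / 2 - 2, by omega⟩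
  have E := (factor_palindrome_iff a x y).1 hpal
  have h4 : a b = a (b + 4) := by convert E (y / 2 - 2) (by omega) using 2 <;> omega
  have h2 : a (b + 1) = a (b + 1 + 2) := by convert E (y / 2 - 1) (by omega) using 2 <;> omega
  rcases H.mod_four_of_eq_add_two h2 with hm | hm
  · have h01 := H.apply_eq_succ (m := b) (by omega)
    have := H.mod_four_of_eq_succ (m := b + 3) (by rw [← h2, ← h01, h4])
    omega
  · have h34 := H.apply_eq_succ (m := b + 3) (by omega)
    have := H.mod_four_of_eq_succ (m := b) (by rw [h4, ← h34, ← h2])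
    omega

lemma palindrome_cases (hpal : (factor a x y).Palindrome) (hy : 0 < y) :
    y = 1 ∨ (y = 3 ∧ (x % 4 = 2 ∨ x % 4 = 3)) ∨ (y % 2 = 0 ∧ (2 * x + y) % 4 = 0) := by
  have E := (factor_palindrome_iff a x y).1 hpal
  rcases Nat.even_or_odd y with ⟨h, rfl⟩ | hodd
  · have e := E (h - 1) (by omega)
    rw [show x + (h + h - 1 - (h - 1)) = x + (h - 1) + 1 by omega] at e
    have := H.mod_four_of_eq_succ e
    omega
  replace hodd := Nat.odd_iff.1 hodd
  rcases (by omega : y = 1 ∨ y = 3 ∨ 5 ≤ y) with rfl | rfl | h5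
  · exact .inl rfl
  · exact .inr (.inl ⟨rfl, H.mod_four_of_eq_add_two (E 0 (by norm_num))⟩)
  · exact (H.not_palindrome_of_odd hodd h5 hpal).elim

lemma palindrome_extend_of_mod_one (hx : x % 4 = 0) (hy : y % 4 = 2)
    (h : (factor a (x + 1) y).Palindrome) : (factor a x (y + 2)).Palindrome := by
  refine factor_palindrome_extend h ?_
  have h03 := H.apply_eq_add_three hx
  rcases (by omega : y = 2 ∨ 6 ≤ y) with rfl | hy6
  · exact h03
  have e := (factor_palindrome_iff a _ _).1 h 2 (by omega)
  have h03' := H.apply_eq_add_three (m := x + y - 2) (by omega)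
  rw [show x + 1 + 2 = x + 3 by omega, show x + 1 + (y - 1 - 2) = x + y - 2 by omega] at e
  rw [h03, e, h03', show x + y - 2 + 3 = x + y + 1 by omega]

lemma palindrome_extend_of_mod_two (hx : x % 4 = 0) (hy : y % 4 = 0) (hy₀ : 0 < y)
    (h : (factor a (x + 2) y).Palindrome) : (factor a x (y + 4)).Palindrome := by
  refine H.palindrome_extend_of_mod_one hx (by omega) (factor_palindrome_extend h ?_)
  have e := (factor_palindrome_iff a _ _).1 h 0 (by omega)
  rw [H.apply_eq_succ (m := x + 1) (by omega), ← H.apply_eq_succ (m := x + 1 + y) (by omega)]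
  convert e using 2; omega

lemma exists_aligned_hull (hpal : (factor a x y).Palindrome) (hy : 0 < y) (heven : y % 2 = 0)
    (hx : x % 4 ≠ 3) :
    ∃ z r, (factor a (4 * z) (4 * r)).Palindrome ∧ EmbedCenter x y z r := by
  have hc := ((H.palindrome_cases hpal hy).resolve_left (by omega)).resolve_left (by omega)
  obtain ⟨z, hz⟩ : ∃ z, x = 4 * z + x % 4 := ⟨x / 4, by omega⟩
  rcases (by omega : x % 4 = 0 ∨ x % 4 = 1 ∨ x % 4 = 2) with h | h | h <;> rw [h] at hz <;> subst hz
  · exact ⟨z, y / 4, by rwa [show 4 * (y / 4) = y by omega, ← Nat.add_zero (4 * z)],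
      by simp only [EmbedCenter]; omega⟩
  · refine ⟨z, y / 4 + 1, ?_, by simp only [EmbedCenter]; omega⟩
    rw [show 4 * (y / 4 + 1) = y + 2 by omega]
    exact H.palindrome_extend_of_mod_one (by omega) (by omega) hpal
  · refine ⟨z, y / 4 + 1, ?_, by simp only [EmbedCenter]; omega⟩
    rw [show 4 * (y / 4 + 1) = y + 4 by omega]
    exact H.palindrome_extend_of_mod_two (by omega) (by omega) hy hpal

lemma factor_four_mul_four_palindrome (t : ℕ) : (factor a (4 * t) 4).Palindrome :=
  H.palindrome_extend_of_mod_one (by omega) rfl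
    (factor_palindrome_extend .nil (H.apply_eq_succ (by omega)))

lemma P_four_mul_add_four_le (t : ℕ) : P a (4 * t + 4) ≤ P a (4 * t) + 1 :=
  P_le_of_palindrome (H.factor_four_mul_four_palindrome t) rfl

end ABBABlocks

structure PBlockIneqs (a : ℕ → α) (t : ℕ) : Prop where
  lt_add_one : P a (4 * t) < P a (4 * t + 1)
  lt_add_two : P a (4 * t) < P a (4 * t + 2)
  add_four_lt_add_three : P a (4 * t + 4) < P a (4 * t + 3)
  add_four_lt_add_two : P a (4 * t + 4) < P a (4 * t + 2)

namespace ABBABlocks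

variable {a : ℕ → α} (H : ABBABlocks a) {t : ℕ} (ih : ∀ s < t, PBlockIneqs a s)
include H ih

lemma P_four_mul_lt_add_one : P a (4 * t) < P a (4 * t + 1) := by
  obtain ⟨u, hu, hPu, hpal⟩ := exists_lt_P_of_pos (a := a) (n := 4 * t + 1) (by omega)
  rcases H.palindrome_cases hpal (by omega) with h1 | ⟨h3, hu4⟩ | ⟨heven, hc⟩
  · obtain rfl : u = 4 * t := by omega
    exact hPu
  · obtain ⟨s, rfl⟩ : ∃ s, u = 4 * s + 2 := ⟨u / 4, by omega⟩
    have hs := (ih s (by omega)).lt_add_two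
    have hblock := H.P_four_mul_add_four_le s
    rw [show 4 * s + 4 = 4 * t by omega] at hblock
    omega
  · obtain ⟨s, rfl⟩ : ∃ s, u = 4 * s + 3 := ⟨u / 4, by omega⟩
    have hs := (ih s (by omega)).add_four_lt_add_three
    have hinner := P_le_of_palindrome (v := 4 * t)
      (factor_palindrome_of_centered hpal (x' := 4 * s + 4) (y' := 4 * t - (4 * s + 4))
        (by omega) (by omega) (by omega)) (by omega)
    omega

lemma P_four_mul_lt_add_two (hC : P a (4 * t) < P a (4 * t + 1)) :
    P a (4 * t) < P a (4 * t + 2) ∧ P a (4 * t + 4) < P a (4 * t + 2) := by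
  have hblock := H.P_four_mul_add_four_le t
  obtain ⟨u, hu, hPu, hpal⟩ := exists_lt_P_of_pos (a := a) (n := 4 * t + 2) (by omega)
  rcases H.palindrome_cases hpal (by omega) with h1 | ⟨h3, hu4⟩ | ⟨heven, hc⟩
  · obtain rfl : u = 4 * t + 1 := by omega
    omega
  · obtain ⟨s, rfl⟩ : ∃ s, u = 4 * s + 3 := ⟨u / 4, by omega⟩
    have hs := (ih s (by omega)).add_four_lt_add_three
    rw [show 4 * s + 4 = 4 * t by omega] at hs
    omega
  · obtain ⟨s, rfl⟩ : ∃ s, u = 4 * s + 2 := ⟨u / 4, by omega⟩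
    have hs := ih s (by omega)
    have hinner := P_le_of_palindrome (v := 4 * t)
      (factor_palindrome_of_centered hpal (x' := 4 * s + 4) (y' := 4 * t - (4 * s + 4))
        (by omega) (by omega) (by omega)) (by omega)
    have houter := P_le_of_palindrome (v := 4 * t + 4)
      (H.palindrome_extend_of_mod_two (x := 4 * s) (by omega) (by omega) (by omega) hpal)
      (by omega)
    have := hs.lt_add_two
    have := hs.add_four_lt_add_two
    omega

lemma P_four_mul_add_four_lt_add_three (hC : P a (4 * t) < P a (4 * t + 1))
    (hA : P a (4 * t) < P a (4 * t + 2)) : P a (4 * t + 4) < P a (4 * t + 3) := by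
  have hblock := H.P_four_mul_add_four_le t
  obtain ⟨u, hu, hPu, hpal⟩ := exists_lt_P_of_pos (a := a) (n := 4 * t + 3) (by omega)
  rcases H.palindrome_cases hpal (by omega) with h1 | ⟨h3, hu4⟩ | ⟨heven, hc⟩
  · obtain rfl : u = 4 * t + 2 := by omega
    omega
  · omega
  · obtain ⟨s, rfl⟩ : ∃ s, u = 4 * s + 1 := ⟨u / 4, by omega⟩
    have hs : P a (4 * s) < P a (4 * s + 1) := by
      rcases (by omega : s < t ∨ s = t) with hst | rfl
      exacts [(ih s hst).lt_add_one, hC]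
    have houter := P_le_of_palindrome (v := 4 * t + 4)
      (H.palindrome_extend_of_mod_one (x := 4 * s) (by omega) (by omega) hpal) (by omega)
    omega

end ABBABlocks

lemma ABBABlocks.pBlockIneqs {a : ℕ → α} (H : ABBABlocks a) (t : ℕ) : PBlockIneqs a t := by
  induction t using Nat.strong_induction_on with
  | _ t ih =>
    have hC := H.P_four_mul_lt_add_one ih
    obtain ⟨hA, hD⟩ := H.P_four_mul_lt_add_two ih hC
    exact ⟨hC, hA, H.P_four_mul_add_four_lt_add_three ih hC hA, hD⟩

section GoodDecomposition

variable {a : ℕ → α}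

def IsGoodPiece (a : ℕ → α) (x : ℕ) (p : List α) : Prop :=
  p.Palindrome ∧ p.length ≠ 3 ∧
    (Even p.length → ∃ z r, (factor a (4 * z) (4 * r)).Palindrome ∧ EmbedCenter x p.length z r)

def HasGoodDecomposition (a : ℕ → α) (n : ℕ) : Prop :=
  ∃ ps : List (List α), ps.flatten = prefixWord a n ∧ ps.length = P a n ∧
    ∀ i (hi : i < ps.length), IsGoodPiece a ((ps.take i).map List.length).sum ps[i]

lemma isGoodPiece_factor_one (x : ℕ) : IsGoodPiece a x (factor a x 1) := by
  simp [IsGoodPiece, factor_one, List.Palindrome.singleton]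

lemma isGoodPiece_of_aligned {z r : ℕ} (h : (factor a (4 * z) (4 * r)).Palindrome) :
    IsGoodPiece a (4 * z) (factor a (4 * z) (4 * r)) :=
  ⟨h, by simp; omega, fun _ => ⟨z, r, h, by simp [EmbedCenter]⟩⟩

lemma hasGoodDecomposition_zero : HasGoodDecomposition a 0 := by
  have : P a 0 ≤ 0 := palLen_le (ps := []) (by simp [prefixWord, factor]) (by simp)
  exact ⟨[], by simp [prefixWord, factor], by simp; omega, by simp⟩

lemma HasGoodDecomposition.snoc {m y n : ℕ} (hG : HasGoodDecomposition a m)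
    (hp : IsGoodPiece a m (factor a m y)) (hP : P a m < P a n) (hn : m + y = n) :
    HasGoodDecomposition a n := by
  obtain ⟨ps, hflat, hlen, hgood⟩ := hG
  have hsum : (ps.map List.length).sum = m := by
    simpa [List.length_flatten] using congrArg List.length hflat
  refine ⟨ps ++ [factor a m y], by simp [hflat, ← hn, prefixWord_add], ?_, fun i hi => ?_⟩
  · have := P_le_of_palindrome hp.1 hn
    simp only [List.length_append, List.length_singleton]
    omega
  · simp only [List.length_append, List.length_singleton] at hi
    rcases (by omega : i < ps.length ∨ i = ps.length) with hi | rfl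
    · simpa [List.getElem_append_left hi, List.take_append_of_le_length hi.le] using hgood i hi
    · simpa [hsum] using hp

lemma HasGoodDecomposition.snoc_snoc_one {m y n : ℕ} (hG : HasGoodDecomposition a m)
    (hp : IsGoodPiece a m (factor a m y)) (hP : P a m + 2 ≤ P a n) (hn : m + y + 1 = n) :
    HasGoodDecomposition a n := by
  have h₁ := P_le_of_palindrome hp.1 rfl
  have h₂ := P_succ_le (a := a) (m + y)
  rw [hn] at h₂
  exact (hG.snoc hp (by omega) rfl).snoc (isGoodPiece_factor_one _) (by omega) hn

end GoodDecomposition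

lemma ABBABlocks.hasGoodDecomposition {a : ℕ → α} (H : ABBABlocks a) (n : ℕ) :
    HasGoodDecomposition a n := by
  induction n using Nat.strong_induction_on with
  | _ n ih =>
  rcases Nat.eq_zero_or_pos n with rfl | hn
  · exact hasGoodDecomposition_zero
  obtain ⟨u, hu, hPu, hpal⟩ := exists_lt_P_of_pos (a := a) hn
  rcases H.palindrome_cases hpal (by omega) with h1 | ⟨h3, hu4⟩ | ⟨heven, hc⟩
  · exact (ih u hu).snoc (isGoodPiece_factor_one u) hPu (by omega)
  · rcases hu4 with hu4 | hu4
    · obtain ⟨s, rfl⟩ : ∃ s, u = 4 * s + 2 := ⟨u / 4, by omega⟩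
      have hs := (H.pBlockIneqs s).lt_add_two
      have hblock := isGoodPiece_of_aligned (a := a) (z := s) (r := 1)
        (by simpa using H.factor_four_mul_four_palindrome s)
      exact (ih (4 * s) (by omega)).snoc_snoc_one hblock (by omega) (by omega)
    · obtain ⟨s, rfl⟩ : ∃ s, u = 4 * s + 3 := ⟨u / 4, by omega⟩
      have hs := (H.pBlockIneqs s).add_four_lt_add_three
      exact (ih (4 * s + 4) (by omega)).snoc_snoc_one (isGoodPiece_factor_one _) (by omega)
        (by omega)
  · by_cases hu3 : u % 4 = 3
    · obtain ⟨s, rfl⟩ : ∃ s, u = 4 * s + 3 := ⟨u / 4, by omega⟩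
      have hs := (H.pBlockIneqs s).add_four_lt_add_three
      rw [show 4 * s + 4 = 4 * (s + 1) by ring] at hs
      have hinner := isGoodPiece_of_aligned (z := s + 1) (r := (n - 1 - (4 * s + 4)) / 4)
        (factor_palindrome_of_centered hpal (by omega) (by omega) (by omega))
      exact (ih _ (by omega)).snoc_snoc_one hinner (by omega) (by omega)
    · refine (ih u hu).snoc ⟨hpal, by simp; omega, fun _ => ?_⟩ hPu (by omega)
      simpa using H.exists_aligned_hull hpal (by omega) heven hu3

end PalLength

theorem stmt4 {α : Type*} (a : ℕ → α) (hC : InC a) (k : ℕ) :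
    ∃ ps : List (List α),
      ps.flatten = prefixWord a k ∧ ps.length = P a k ∧ (∀ p ∈ ps, p.Palindrome) ∧
      ∀ i (hi : i < ps.length),
        (ps.get ⟨i, hi⟩).length ≠ 3 ∧
        (Even (ps.get ⟨i, hi⟩).length →
          ∃ z r : ℕ, (factor a (4 * z) (4 * r)).Palindrome ∧
            EmbedCenter (((ps.take i).map List.length).sum)
              (ps.get ⟨i, hi⟩).length z r) := by
  obtain ⟨ps, hflat, hlen, hgood⟩ := (PalLength.InC.abbaBlocks hC).hasGoodDecomposition k
  refine ⟨ps, hflat, hlen, fun p hp => ?_, fun i hi => (hgood i hi).2⟩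
  obtain ⟨i, hi, rfl⟩ := List.mem_iff_getElem.1 hp
  exact (hgood i hi).1
end

section
/- Let a : ℕ → α be a sequence in the class 𝒞 and let P_a(n) denote the palindromic length of its prefix of length n. Then for every k ≥ 0: P_a(4k+1) ≤ P_a(4k+4) + 2, P_a(4k+2) ≤ P_a(4k+4) + 2, and P_a(4k+3) ≤ P_a(4k+4) + 1. -/
/-
The prefix of length `4k+4` of `a` ends in a block `x y y z` (the words `wₙ`, `n ≥ 1`, are
concatenations of length-4 blocks whose two middle letters agree). So it suffices that deleting a
final run `cᶨ` of equal letters lowers the palindromic length by at most one: in an optimal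
factorisation of `s cᶨ`, either the last palindrome lies inside `cᶨ` and we recurse, or it is
`t cᶨ` with `t = cᶨ m`, `m` a palindrome, or `t` itself a power of `c`.
-/

namespace List.Palindrome

variable {α : Type*}

theorem replicate (n : ℕ) (c : α) : (List.replicate n c).Palindrome :=
  of_reverse_eq List.reverse_replicate

theorem append_cases {t u : List α} (h : (t ++ u).Palindrome) :
    (∃ m, m.Palindrome ∧ t = u.reverse ++ m) ∨ ∃ m, m.Palindrome ∧ u = m ++ t.reverse := by
  have hrev : u.reverse ++ t.reverse = t ++ u := by rw [← List.reverse_append, h.reverse_eq]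
  rcases List.append_eq_append_iff.mp hrev with ⟨m, ht, hu⟩ | ⟨m, hu, ht⟩
  · refine .inl ⟨m, of_reverse_eq ?_, ht⟩
    rw [ht, List.reverse_append, List.reverse_reverse] at hu
    exact List.append_cancel_right hu
  · refine .inr ⟨m, of_reverse_eq ?_, ht⟩
    rw [ht, List.reverse_append, List.reverse_reverse] at hu
    exact List.append_cancel_left hu

end List.Palindrome

section PalLen

variable {α : Type*}

theorem palLen_le_length {w : List α} {ps : List (List α)} (hps : ∀ p ∈ ps, p.Palindrome)
    (h : ps.flatten = w) : palLen w ≤ ps.length :=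
  Nat.sInf_le ⟨ps, rfl, hps, h⟩

theorem exists_palindromes_length_eq_palLen (w : List α) :
    ∃ ps : List (List α), ps.length = palLen w ∧ (∀ p ∈ ps, p.Palindrome) ∧ ps.flatten = w :=
  Nat.sInf_mem (s := {k | ∃ ps : List (List α), ps.length = k ∧ (∀ p ∈ ps, p.Palindrome) ∧
    ps.flatten = w}) ⟨_, w.map ([·]), rfl, by simpa using fun c _ => List.Palindrome.singleton c,
    List.flatMap_singleton' w⟩

theorem palLen_le_of_flatten_eq_append_replicate (c : α) {ps : List (List α)}
    (hps : ∀ p ∈ ps, p.Palindrome) {s : List α} {j : ℕ}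
    (h : ps.flatten = s ++ List.replicate j c) : palLen s ≤ ps.length + 1 := by
  induction ps using List.reverseRecOn generalizing j with
  | nil =>
    obtain ⟨rfl, -⟩ := List.append_eq_nil_iff.mp h.symm
    exact (palLen_le_length (w := []) (ps := []) (by simp) rfl).trans (Nat.zero_le 1)
  | append_singleton qs p ih =>
    have hqs : ∀ q ∈ qs, q.Palindrome := fun q hq => hps q (by simp [hq])
    have hp : p.Palindrome := hps p (by simp)
    rw [List.length_append, List.length_singleton]
    rw [List.flatten_append, List.flatten_singleton] at h
    rcases List.append_eq_append_iff.mp h with ⟨t, hs, rfl⟩ | ⟨r, hqr, hrp⟩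
    · rcases hp.append_cases with ⟨m, hm, rfl⟩ | ⟨m, -, hjm⟩
      · have hc := List.Palindrome.replicate j c
        have := palLen_le_length (w := s) (ps := qs ++ [List.replicate j c, m])
          (by simpa [or_imp, forall_and, hc, hm] using hqs) (by simp [hs])
        simpa using this
      · have ht : t.Palindrome := by
          obtain ⟨-, -, htc⟩ := List.append_eq_replicate_iff.mp hjm.symm
          rw [← List.reverse_reverse t, htc, List.reverse_replicate]
          exact List.Palindrome.replicate _ c
        have := palLen_le_length (w := s) (ps := qs ++ [t])
          (by simpa [or_imp, forall_and, ht] using hqs) (by simp [hs])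
        simp only [List.length_append, List.length_singleton] at this
        omega
    · obtain ⟨-, hr, -⟩ := List.append_eq_replicate_iff.mp hrp.symm
      have := ih hqs (hqr.trans (congrArg (s ++ ·) hr))
      omega

theorem palLen_le_palLen_append_replicate_add_one (s : List α) (j : ℕ) (c : α) :
    palLen s ≤ palLen (s ++ List.replicate j c) + 1 := by
  obtain ⟨ps, hlen, hps, h⟩ := exists_palindromes_length_eq_palLen (s ++ List.replicate j c)
  exact hlen ▸ palLen_le_of_flatten_eq_append_replicate c hps h

theorem palLen_le_palLen_append_singleton_add_one (s : List α) (c : α) :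
    palLen s ≤ palLen (s ++ [c]) + 1 :=
  palLen_le_palLen_append_replicate_add_one s 1 c

end PalLen

section MiddlesAgree

variable {α β : Type*}

def MiddlesAgree (w : List α) : Prop :=
  4 ∣ w.length ∧ ∀ k, w[4 * k + 1]? = w[4 * k + 2]?

theorem MiddlesAgree.map {w : List α} (hw : MiddlesAgree w) (f : α → β) :
    MiddlesAgree (w.map f) :=
  ⟨by simpa using hw.1, fun k => by simp only [List.getElem?_map, hw.2 k]⟩

theorem MiddlesAgree.append {u v : List α} (hu : MiddlesAgree u) (hv : MiddlesAgree v) :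
    MiddlesAgree (u ++ v) := by
  refine ⟨by simpa using dvd_add hu.1 hv.1, fun k => ?_⟩
  obtain ⟨m, hm⟩ := hu.1
  rw [List.getElem?_append, List.getElem?_append]
  split_ifs with h₁ h₂ h₂
  · exact hu.2 k
  · omega
  · omega
  · have e₁ : 4 * k + 1 - u.length = 4 * (k - m) + 1 := by omega
    have e₂ : 4 * k + 2 - u.length = 4 * (k - m) + 2 := by omega
    rw [e₁, e₂, hv.2]

end MiddlesAgree

theorem InC.apply_four_mul_add_one {α : Type*} {a : ℕ → α} (hC : InC a) (k : ℕ) :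
    a (4 * k + 1) = a (4 * k + 2) := by
  obtain ⟨c, f, w, h0, hrec, -, hpref⟩ := hC
  have hw : ∀ n, MiddlesAgree (w (n + 1)) := by
    intro n
    induction n with
    | zero =>
      rw [hrec, h0]
      refine ⟨by simp, fun k => ?_⟩
      rcases k with _ | k
      · simp
      · rw [List.getElem?_eq_none (by simp; omega), List.getElem?_eq_none (by simp; omega)]
    | succ n ih =>
      rw [hrec]
      exact ((ih.append (ih.map _)).append (ih.map _)).append ih
  have hk : 4 * k + 2 < 4 ^ (4 * k + 3) :=
    (Nat.lt_succ_self _).trans (Nat.lt_pow_self (by norm_num))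
  simpa [hpref, List.getElem?_range, hk, (Nat.lt_succ_self _).trans hk] using (hw (4 * k + 2)).2 k

theorem prefixWord_succ {α : Type*} (a : ℕ → α) (n : ℕ) :
    prefixWord a (n + 1) = prefixWord a n ++ [a n] := by
  simp [prefixWord, factor, List.range_succ]

theorem P_le_P_succ_add_one {α : Type*} (a : ℕ → α) (n : ℕ) : P a n ≤ P a (n + 1) + 1 := by
  simpa only [P, prefixWord_succ] using palLen_le_palLen_append_singleton_add_one _ (a n)

theorem InC.P_four_mul_add_one_le {α : Type*} {a : ℕ → α} (hC : InC a) (k : ℕ) :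
    P a (4 * k + 1) ≤ P a (4 * k + 3) + 1 := by
  have h : prefixWord a (4 * k + 3) =
      prefixWord a (4 * k + 1) ++ List.replicate 2 (a (4 * k + 1)) := by
    rw [prefixWord_succ, prefixWord_succ, ← hC.apply_four_mul_add_one k]
    simp
  simpa only [P, h] using palLen_le_palLen_append_replicate_add_one _ 2 _

theorem stmt6 {α : Type*} (a : ℕ → α) (hC : InC a) (k : ℕ) :
    P a (4 * k + 1) ≤ P a (4 * k + 4) + 2 ∧
    P a (4 * k + 2) ≤ P a (4 * k + 4) + 2 ∧
    P a (4 * k + 3) ≤ P a (4 * k + 4) + 1 := by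
  have h₁ := hC.P_four_mul_add_one_le k
  have h₂ : P a (4 * k + 2) ≤ P a (4 * k + 3) + 1 := P_le_P_succ_add_one a _
  have h₃ : P a (4 * k + 3) ≤ P a (4 * k + 4) + 1 := P_le_P_succ_add_one a _
  omega
end

section
/- Let a : ℕ → α be a sequence in the class 𝒞 over the alphabet α, let β be another alphabet, and let f : α × α × α × α ≃ β be a bijection. Then the sequence b : ℕ → β defined by b(n) = f(a(4n), a(4n+1), a(4n+2), a(4n+3)) also belongs to the class 𝒞 (over β). -/
/-!
If the prefix of `a` of length `4 ^ (n + 1)` is `u g(u) g(u) u`, then, as each quarter has length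
divisible by 4, every block of four letters in the second and third quarters is the corresponding
block of `u` with `g` applied letterwise, and every block in the last quarter equals the
corresponding block of `u`. Coding blocks by `f`, the prefix of `b` of length `4 ^ n` has the same
shape for the conjugate `f ∘ (g × g × g × g) ∘ f⁻¹`, which moves a coded block exactly when `g`
moves one of its letters.
-/

section

variable {α β : Type*}

/-- The prefix of `a` of length `4 * m` is `u · g(u) · g(u) · u`, where `u` is the prefix of
length `m`. -/
def IsCStep (a : ℕ → α) (m : ℕ) (g : α → α) : Prop :=
  ∀ i < m, a (m + i) = g (a i) ∧ a (2 * m + i) = g (a i) ∧ a (3 * m + i) = a i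

def blockMap (f : α × α × α × α ≃ β) (a : ℕ → α) (k : ℕ) : β :=
  f (a (4 * k), a (4 * k + 1), a (4 * k + 2), a (4 * k + 3))

lemma List.append_append_append_inj_iff {A B C D B' C' D' : List α}
    (hB : B.length = B'.length) (hC : C.length = C'.length) :
    A ++ B ++ C ++ D = A ++ B' ++ C' ++ D' ↔ B = B' ∧ C = C' ∧ D = D' := by
  refine ⟨fun h => ?_, fun ⟨rfl, rfl, rfl⟩ => rfl⟩
  simp only [List.append_assoc, List.append_cancel_left_eq] at h
  obtain ⟨rfl, hCD⟩ := List.append_inj h hB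
  obtain ⟨rfl, rfl⟩ := List.append_inj hCD hC
  exact ⟨rfl, rfl, rfl⟩

lemma List.map_range_four_mul {γ : Type*} (g : ℕ → γ) (m : ℕ) :
    (List.range (4 * m)).map g
      = (List.range m).map g ++ (List.range m).map (fun i => g (m + i))
        ++ (List.range m).map (fun i => g (2 * m + i))
        ++ (List.range m).map (fun i => g (3 * m + i)) := by
  rw [show 4 * m = m + m + m + m by ring, List.range_add, List.range_add, List.range_add]
  simp only [List.map_append, List.map_map, Function.comp_def, List.append_assoc]
  congr 3 <;> refine List.map_congr_left fun i _ => congrArg g ?_ <;> ring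

lemma isCStep_iff_map_range (a : ℕ → α) (m : ℕ) (g : α → α) :
    IsCStep a m g ↔ (List.range (4 * m)).map a
      = (List.range m).map a ++ ((List.range m).map a).map g
        ++ ((List.range m).map a).map g ++ (List.range m).map a := by
  rw [List.map_range_four_mul, List.append_append_append_inj_iff (by simp) (by simp)]
  simp only [List.map_map, List.map_inj_left, List.mem_range, Function.comp_apply, IsCStep,
    ← forall_and]

lemma map_range_ne_iff (a : ℕ → α) (m : ℕ) (g : α → α) :
    ((List.range m).map a).map g ≠ (List.range m).map a ↔ ∃ i < m, g (a i) ≠ a i := by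
  simp [List.map_inj_left]

theorem inC_iff (a : ℕ → α) :
    InC a ↔ ∃ F : ℕ → α ≃ α, ∀ n, IsCStep a (4 ^ n) (F n) ∧ ∃ i < 4 ^ n, F n (a i) ≠ a i := by
  constructor
  · rintro ⟨c, F, w, -, hrec, hne, hpre⟩
    obtain rfl : w = fun n => (List.range (4 ^ n)).map a := funext hpre
    refine ⟨F, fun n => ⟨?_, (map_range_ne_iff a _ _).1 (hne n)⟩⟩
    rw [isCStep_iff_map_range, ← pow_succ']
    exact hrec n
  · rintro ⟨F, hF⟩
    refine ⟨a 0, F, fun n => (List.range (4 ^ n)).map a, by simp, fun n => ?_,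
      fun n => (map_range_ne_iff a _ _).2 (hF n).2, fun _ => rfl⟩
    dsimp only
    rw [pow_succ', ← isCStep_iff_map_range]
    exact (hF n).1

def blockPerm (f : α × α × α × α ≃ β) (g : Equiv.Perm α) : Equiv.Perm β :=
  f.permCongr (g.prodCongr (g.prodCongr (g.prodCongr g)))

lemma blockPerm_blockMap (f : α × α × α × α ≃ β) (g : Equiv.Perm α) (a : ℕ → α) (k : ℕ) :
    blockPerm f g (blockMap f a k) = blockMap f (g ∘ a) k := by
  simp [blockPerm, blockMap, Equiv.permCongr_apply, Equiv.prodCongr_apply]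

lemma blockMap_congr (f : α × α × α × α ≃ β) {a a' : ℕ → α} {k k' : ℕ}
    (h : ∀ j < 4, a (4 * k + j) = a' (4 * k' + j)) : blockMap f a k = blockMap f a' k' :=
  congrArg f <| Prod.ext (h 0 (by norm_num)) <| Prod.ext (h 1 (by norm_num)) <|
    Prod.ext (h 2 (by norm_num)) (h 3 (by norm_num))

lemma IsCStep.blockMap {a : ℕ → α} {m : ℕ} {g : Equiv.Perm α} (h : IsCStep a (4 * m) g)
    (f : α × α × α × α ≃ β) : IsCStep (blockMap f a) m (blockPerm f g) := by
  intro k hk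
  rw [blockPerm_blockMap]
  refine ⟨blockMap_congr f fun j hj => ?_, blockMap_congr f fun j hj => ?_,
    blockMap_congr f fun j hj => ?_⟩
  · rw [show 4 * (m + k) + j = 4 * m + (4 * k + j) by ring]
    exact (h _ (by omega)).1
  · rw [show 4 * (2 * m + k) + j = 2 * (4 * m) + (4 * k + j) by ring]
    exact (h _ (by omega)).2.1
  · rw [show 4 * (3 * m + k) + j = 3 * (4 * m) + (4 * k + j) by ring]
    exact (h _ (by omega)).2.2

lemma exists_blockPerm_ne {a : ℕ → α} {m : ℕ} {g : Equiv.Perm α} (f : α × α × α × α ≃ β)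
    (h : ∃ i < 4 * m, g (a i) ≠ a i) : ∃ k < m, blockPerm f g (blockMap f a k) ≠ blockMap f a k := by
  obtain ⟨i, hi, hgi⟩ := h
  refine ⟨i / 4, by omega, fun hk => hgi ?_⟩
  rw [blockPerm_blockMap] at hk
  simp only [blockMap, f.apply_eq_iff_eq, Function.comp_apply, Prod.mk.injEq] at hk
  obtain ⟨h0, h1, h2, h3⟩ := hk
  have hblock : i = 4 * (i / 4) ∨ i = 4 * (i / 4) + 1 ∨ i = 4 * (i / 4) + 2 ∨
      i = 4 * (i / 4) + 3 := by
    omega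
  rcases hblock with hi | hi | hi | hi <;> rw [hi] <;> assumption

end

theorem stmt7 {α β : Type*} (a : ℕ → α) (hC : InC a)
    (f : α × α × α × α ≃ β) (b : ℕ → β)
    (hb : ∀ n, b n = f (a (4 * n), a (4 * n + 1), a (4 * n + 2), a (4 * n + 3))) :
    InC b := by
  obtain rfl : b = blockMap f a := funext hb
  obtain ⟨F, hF⟩ := (inC_iff a).1 hC
  refine (inC_iff _).2 ⟨fun n => blockPerm f (F (n + 1)), fun n => ?_⟩
  obtain ⟨hstep, hne⟩ := hF (n + 1)
  rw [pow_succ'] at hstep hne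
  exact ⟨hstep.blockMap f, exists_blockPerm_ne f hne⟩
end
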